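/- arXiv:2311.00440 — 6 statements merged into one kernel-verified Lean document; each statement's English description precedes it below -/
import Mathlib

section
/- For every integer ℓ ≥ 2 and every real a with -1 ≤ a ≤ 0, one has ℓ·P_ℓ(a) ≤ 1/ℓ; moreover, if ℓ·P_ℓ(a) = 1/ℓ then a = 0. -/
/-!
Let `J j` be the event that `x` is maximal at the distinguished coordinate `i` and `a • x + b • y`
is maximal at `j`. Ties have probability zero, so the events `J j` are almost disjoint and their
union is the event that `x` is maximal at `i`, of probability `1 / ℓ` by exchangeability. For
`a ≤ 0` the measure-preserving swap of `y i` and `y j` maps `J i` into `J j`, hence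
`ℓ * P(J i) ≤ ∑ j, P(J j) ≤ 1 / ℓ`. For `a < 0` the event `J j` also contains a nonempty open set
disjoint from the image of `J i`; it has positive Gaussian measure, so the inequality is strict.
-/

open MeasureTheory ProbabilityTheory Set Function

/-- `Pl ℓ a`: with `x₁,…,x_ℓ,y₁,…,y_ℓ` i.i.d. standard normals and `b = √(1-a²)`,
the probability that `x₁ ≥ x_c` and `a·x₁ + b·y₁ ≥ a·x_c + b·y_c` for all `c`. -/
noncomputable def Pl (ℓ : ℕ) (a : ℝ) : ℝ :=
  if h : ℓ = 0 then 0 else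
    (((Measure.pi fun _ : Fin ℓ => gaussianReal 0 1).prod
        (Measure.pi fun _ : Fin ℓ => gaussianReal 0 1))
      {p | ∀ c : Fin ℓ,
        p.1 c ≤ p.1 ⟨0, Nat.pos_of_ne_zero h⟩ ∧
        a * p.1 c + Real.sqrt (1 - a ^ 2) * p.2 c ≤
          a * p.1 ⟨0, Nat.pos_of_ne_zero h⟩ +
            Real.sqrt (1 - a ^ 2) * p.2 ⟨0, Nat.pos_of_ne_zero h⟩}).toReal

theorem pi_eq_zero_of_forall_update {ι : Type*} [Fintype ι] [DecidableEq ι] {X : ι → Type*}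
    [∀ i, MeasurableSpace (X i)] {μ : ∀ i, Measure (X i)} [∀ i, SigmaFinite (μ i)]
    {s : Set (∀ i, X i)} (hs : MeasurableSet s) (j : ι)
    (h : ∀ x, μ j (update x j ⁻¹' s) = 0) : Measure.pi μ s = 0 := by
  rcases s.eq_empty_or_nonempty with rfl | ⟨x₀, -⟩
  · exact measure_empty
  have hsection : (fun x => ∫⁻ u, s.indicator 1 (update x j u) ∂μ j) = 0 := funext fun x => by
    rw [Pi.zero_apply, ← h x, ← lintegral_indicator_one (measurable_update x hs)]
    rfl
  rw [← lintegral_indicator_one hs, lintegral_eq_lmarginal_univ x₀,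
    lmarginal_erase' _ (measurable_one.indicator hs) (Finset.mem_univ j), hsection]
  simp [lmarginal]

theorem measurePreserving_comp_perm {ι α : Type*} [Fintype ι] [MeasurableSpace α]
    (ν : Measure α) [SigmaFinite ν] (σ : Equiv.Perm ι) :
    MeasurePreserving (fun x : ι → α => x ∘ σ) (Measure.pi fun _ => ν) (Measure.pi fun _ => ν) := by
  convert measurePreserving_arrowCongr' (fun _ => ν) (fun _ => ν) σ.symm (MeasurableEquiv.refl α)
    fun _ => MeasurePreserving.id ν
  ext x
  simp [MeasurableEquiv.arrowCongr', Equiv.arrowCongr']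

section Argmax

variable {ι : Type*}

def argmaxSet (i : ι) : Set (ι → ℝ) := {v | ∀ c, v c ≤ v i}

theorem isClosed_argmaxSet (i : ι) : IsClosed (argmaxSet i) := by
  simp only [argmaxSet, ofPred_forall]
  exact isClosed_iInter fun c => isClosed_le (continuous_apply c) (continuous_apply i)

theorem preimage_comp_perm_argmaxSet (σ : Equiv.Perm ι) (i : ι) :
    (fun v : ι → ℝ => v ∘ σ) ⁻¹' argmaxSet i = argmaxSet (σ i) := by
  ext v
  simp only [mem_preimage, argmaxSet, mem_ofPred_eq, comp_apply]
  exact (σ.surjective.forall (p := fun c => v c ≤ v (σ i))).symm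

theorem iUnion_argmaxSet [Finite ι] [Nonempty ι] : ⋃ i : ι, argmaxSet i = univ :=
  eq_univ_of_forall fun v => mem_iUnion.2 (Finite.exists_max v)

theorem aedisjoint_preimage_argmaxSet {α : Type*} [MeasurableSpace α] {m : Measure α}
    {L : α → ι → ℝ} (h : ∀ j k, j ≠ k → m {p | L p j = L p k} = 0) :
    Pairwise (AEDisjoint m on fun j => L ⁻¹' argmaxSet j) :=
  fun j k hjk => measure_mono_null (fun _ hp => le_antisymm (hp.2 j) (hp.1 k)) (h j k hjk)

def mix (a b : ℝ) (p : (ι → ℝ) × (ι → ℝ)) : ι → ℝ := fun c => a * p.1 c + b * p.2 c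

theorem continuous_mix (a b : ℝ) : Continuous (mix (ι := ι) a b) := by
  unfold mix; fun_prop

theorem measurableSet_mix_tie (a b : ℝ) (j k : ι) :
    MeasurableSet {p : (ι → ℝ) × (ι → ℝ) | mix a b p j = mix a b p k} :=
  measurableSet_eq_fun (by unfold mix; fun_prop) (by unfold mix; fun_prop)

def jointArgmaxSet (a b : ℝ) (i j : ι) : Set ((ι → ℝ) × (ι → ℝ)) :=
  Prod.fst ⁻¹' argmaxSet i ∩ mix a b ⁻¹' argmaxSet j

theorem isClosed_jointArgmaxSet (a b : ℝ) (i j : ι) : IsClosed (jointArgmaxSet a b i j) :=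
  ((isClosed_argmaxSet i).preimage continuous_fst).inter
    ((isClosed_argmaxSet j).preimage (continuous_mix a b))

theorem preimage_swap_jointArgmaxSet_subset [DecidableEq ι] {a : ℝ} (b : ℝ) (ha : a ≤ 0)
    (i j : ι) :
    Prod.map id (fun y => y ∘ Equiv.swap i j) ⁻¹' jointArgmaxSet a b i i ⊆
      jointArgmaxSet a b i j := by
  rintro ⟨x, y⟩ ⟨hx, hxy⟩
  refine ⟨hx, fun c => ?_⟩
  simp only [mem_preimage, argmaxSet, mem_ofPred_eq, mix, Prod.map_fst, Prod.map_snd, id,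
    comp_apply, Equiv.swap_apply_left] at hx hxy ⊢
  have hax : a * x i ≤ a * x j := mul_le_mul_of_nonpos_left (hx j) ha
  rcases eq_or_ne c i with rfl | hci
  · have := hxy j
    rw [Equiv.swap_apply_right] at this
    linarith
  rcases eq_or_ne c j with rfl | hcj
  · exact le_rfl
  · have := hxy c
    rw [Equiv.swap_apply_of_ne_of_ne hci hcj] at this
    linarith

theorem exists_isOpen_subset_jointArgmaxSet_diff_swap [Finite ι] [DecidableEq ι] {a : ℝ} (b : ℝ)
    (ha : a < 0) {i j : ι} (hij : i ≠ j) :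
    ∃ W, IsOpen W ∧ W.Nonempty ∧ W ⊆ jointArgmaxSet a b i j \
      Prod.map id (fun y => y ∘ Equiv.swap i j) ⁻¹' jointArgmaxSet a b i i := by
  -- the last condition says that the swapped point violates the inequality of `J i i` at `j`
  refine ⟨{p | (∀ c, c ≠ i → p.1 c < p.1 i) ∧ (∀ c, c ≠ j → mix a b p c < mix a b p j) ∧
    a * p.1 i + b * p.2 j < a * p.1 j + b * p.2 i}, ?_, ?_, fun p hp => ⟨⟨fun c => ?_, fun c => ?_⟩,
    fun hswap => ?_⟩⟩
  · simp only [ofPred_and, ofPred_forall]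
    refine .inter (isOpen_iInter_of_finite fun c => isOpen_iInter_of_finite fun _ =>
      isOpen_lt (by fun_prop) (by fun_prop)) (.inter (isOpen_iInter_of_finite fun c =>
      isOpen_iInter_of_finite fun _ => isOpen_lt ?_ ?_) (isOpen_lt (by fun_prop) (by fun_prop)))
    all_goals exact (continuous_apply _).comp (continuous_mix a b)
  · refine ⟨(fun c => if c = i then 1 else if c = j then 0 else 1 / 2, 0), ?_, ?_, ?_⟩
    · intro c hc; simp only [hc, if_false]; split_ifs <;> norm_num
    · intro c hc
      simp only [mix, Pi.zero_apply, mul_zero, add_zero, hc, hij.symm, if_false, if_true]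
      split_ifs <;> linarith
    · simp [hij.symm, ha]
  · rcases eq_or_ne c i with rfl | hc
    exacts [le_rfl, (hp.1 c hc).le]
  · rcases eq_or_ne c j with rfl | hc
    exacts [le_rfl, (hp.2.1 c hc).le]
  · have := hswap.2 j
    simp only [mix, Prod.map_fst, Prod.map_snd, id, comp_apply, Equiv.swap_apply_left,
      Equiv.swap_apply_right] at this
    linarith [hp.2.2]

end Argmax

section IID

variable {ι : Type*} [Fintype ι] [DecidableEq ι] {ν : Measure ℝ} [IsProbabilityMeasure ν]

local notation "μ" => Measure.pi fun _ : ι => ν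

theorem pi_tie_eq_zero [NullSingletonClass ν] {b : ℝ} (hb : b ≠ 0) {j k : ι} (hjk : j ≠ k)
    (t : ℝ) : μ {y | b * y j = b * y k + t} = 0 := by
  refine pi_eq_zero_of_forall_update
    (measurableSet_eq_fun (by fun_prop) (by fun_prop)) j fun y => ?_
  refine measure_mono_null (t := {(b * y k + t) / b}) (fun u hu => ?_) (measure_singleton _)
  simp only [mem_preimage, mem_ofPred_eq, update_self, update_of_ne hjk.symm] at hu
  rw [mem_singleton_iff, eq_div_iff hb, mul_comm, hu]

theorem measure_mix_tie_eq_zero_of_right_ne_zero [NullSingletonClass ν] (a : ℝ) {b : ℝ}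
    (hb : b ≠ 0) {j k : ι} (hjk : j ≠ k) :
    Measure.prod μ μ {p | mix a b p j = mix a b p k} = 0 := by
  refine (Measure.measure_prod_null (measurableSet_mix_tie a b j k)).2
    (Filter.Eventually.of_forall fun x => ?_)
  refine measure_mono_null (fun y hy => ?_) (pi_tie_eq_zero hb hjk (a * x k - a * x j))
  simp only [mem_preimage, mem_ofPred_eq, mix] at hy ⊢
  linarith

theorem measure_mix_tie_eq_zero [NullSingletonClass ν] {a b : ℝ} (hab : a ≠ 0 ∨ b ≠ 0)
    {j k : ι} (hjk : j ≠ k) : Measure.prod μ μ {p | mix a b p j = mix a b p k} = 0 := by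
  rcases hab with ha | hb
  · -- swapping the two factors exchanges the roles of `a` and `b`
    rw [← Measure.measurePreserving_swap.measure_preimage
      (measurableSet_mix_tie a b j k).nullMeasurableSet]
    convert measure_mix_tie_eq_zero_of_right_ne_zero (ν := ν) b ha hjk using 2
    ext p
    simp only [mem_preimage, mem_ofPred_eq, mix, Prod.fst_swap, Prod.snd_swap]
    constructor <;> intro h <;> linarith
  · exact measure_mix_tie_eq_zero_of_right_ne_zero a hb hjk

theorem pi_argmaxSet [NullSingletonClass ν] (i : ι) :
    μ (argmaxSet i) = (Fintype.card ι : ENNReal)⁻¹ := by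
  have : Nonempty ι := ⟨i⟩
  have hsymm : ∀ j, μ (argmaxSet j) = μ (argmaxSet i) := fun j => by
    rw [← Equiv.swap_apply_left i j, ← preimage_comp_perm_argmaxSet,
      (measurePreserving_comp_perm ν _).measure_preimage
        (isClosed_argmaxSet i).measurableSet.nullMeasurableSet]
  have hdisj : Pairwise (AEDisjoint μ on fun j => argmaxSet (ι := ι) j) :=
    aedisjoint_preimage_argmaxSet (L := id) fun j k hjk => by
      simpa using pi_tie_eq_zero (ν := ν) one_ne_zero hjk 0
  have hsum := measure_iUnion₀ hdisj
    fun j => (isClosed_argmaxSet j).measurableSet.nullMeasurableSet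
  rw [iUnion_argmaxSet, measure_univ, tsum_fintype, Finset.sum_congr rfl fun j _ => hsymm j,
    Finset.sum_const, Finset.card_univ, nsmul_eq_mul] at hsum
  exact ENNReal.eq_inv_of_mul_eq_one_left ((mul_comm _ _).trans hsum.symm)

theorem measure_jointArgmaxSet_self_le {a : ℝ} (b : ℝ) (ha : a ≤ 0) (i j : ι) :
    Measure.prod μ μ (jointArgmaxSet a b i i) ≤ Measure.prod μ μ (jointArgmaxSet a b i j) := by
  rw [← ((MeasurePreserving.id μ).prod
    (measurePreserving_comp_perm ν (Equiv.swap i j))).measure_preimage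
      (isClosed_jointArgmaxSet a b i i).measurableSet.nullMeasurableSet]
  exact measure_mono (preimage_swap_jointArgmaxSet_subset b ha i j)

theorem measure_jointArgmaxSet_self_lt [ν.IsOpenPosMeasure] {a : ℝ} (b : ℝ) (ha : a < 0)
    {i j : ι} (hij : i ≠ j) :
    Measure.prod μ μ (jointArgmaxSet a b i i) < Measure.prod μ μ (jointArgmaxSet a b i j) := by
  set τ := Prod.map id (fun y : ι → ℝ => y ∘ Equiv.swap i j)
  have hτ : MeasurePreserving τ (Measure.prod μ μ) (Measure.prod μ μ) :=
    (MeasurePreserving.id μ).prod (measurePreserving_comp_perm ν _)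
  obtain ⟨W, hW_open, hW_nonempty, hW⟩ := exists_isOpen_subset_jointArgmaxSet_diff_swap b ha hij
  obtain ⟨hW_sub, hW_disj⟩ := subset_sdiff.1 hW
  have : (Measure.prod μ μ).IsOpenPosMeasure := Measure.prod.instIsOpenPosMeasure
  calc Measure.prod μ μ (jointArgmaxSet a b i i)
      = Measure.prod μ μ (τ ⁻¹' jointArgmaxSet a b i i) :=
        (hτ.measure_preimage (isClosed_jointArgmaxSet a b i i).measurableSet.nullMeasurableSet).symm
    _ < Measure.prod μ μ (τ ⁻¹' jointArgmaxSet a b i i) + Measure.prod μ μ W :=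
        ENNReal.lt_add_right (measure_ne_top _ _) (hW_open.measure_pos _ hW_nonempty).ne'
    _ = Measure.prod μ μ (τ ⁻¹' jointArgmaxSet a b i i ∪ W) :=
        (measure_union hW_disj.symm hW_open.measurableSet).symm
    _ ≤ Measure.prod μ μ (jointArgmaxSet a b i j) :=
        measure_mono (union_subset (preimage_swap_jointArgmaxSet_subset b ha.le i j) hW_sub)

theorem sum_measure_jointArgmaxSet_le [NullSingletonClass ν] {a b : ℝ} (hab : a ≠ 0 ∨ b ≠ 0)
    (i : ι) : ∑ j, Measure.prod μ μ (jointArgmaxSet a b i j) ≤ (Fintype.card ι : ENNReal)⁻¹ := by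
  have hdisj : Pairwise (AEDisjoint (Measure.prod μ μ) on jointArgmaxSet a b i) :=
    (aedisjoint_preimage_argmaxSet fun j k hjk => measure_mix_tie_eq_zero hab hjk).mono
      fun j k h => h.mono inter_subset_right inter_subset_right
  calc ∑ j, Measure.prod μ μ (jointArgmaxSet a b i j)
      = Measure.prod μ μ (⋃ j, jointArgmaxSet a b i j) := by
        rw [measure_iUnion₀ hdisj
          fun j => (isClosed_jointArgmaxSet a b i j).measurableSet.nullMeasurableSet, tsum_fintype]
    _ ≤ Measure.prod μ μ (Prod.fst ⁻¹' argmaxSet i) :=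
        measure_mono (iUnion_subset fun j => inter_subset_left)
    _ = μ (argmaxSet i) := measurePreserving_fst.measure_preimage
        (isClosed_argmaxSet i).measurableSet.nullMeasurableSet
    _ = _ := pi_argmaxSet i

theorem card_mul_measure_jointArgmaxSet_le [NullSingletonClass ν] {a b : ℝ} (ha : a ≤ 0)
    (hab : a ≠ 0 ∨ b ≠ 0) (i : ι) :
    Fintype.card ι * Measure.prod μ μ (jointArgmaxSet a b i i) ≤ (Fintype.card ι : ENNReal)⁻¹ :=
  calc Fintype.card ι * Measure.prod μ μ (jointArgmaxSet a b i i)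
      = ∑ _j : ι, Measure.prod μ μ (jointArgmaxSet a b i i) := by simp
    _ ≤ ∑ j, Measure.prod μ μ (jointArgmaxSet a b i j) :=
        Finset.sum_le_sum fun j _ => measure_jointArgmaxSet_self_le b ha i j
    _ ≤ _ := sum_measure_jointArgmaxSet_le hab i

theorem card_mul_measure_jointArgmaxSet_lt [NullSingletonClass ν] [ν.IsOpenPosMeasure] {a : ℝ}
    (b : ℝ) (ha : a < 0) {i j : ι} (hij : i ≠ j) :
    Fintype.card ι * Measure.prod μ μ (jointArgmaxSet a b i i) < (Fintype.card ι : ENNReal)⁻¹ :=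
  calc Fintype.card ι * Measure.prod μ μ (jointArgmaxSet a b i i)
      = ∑ _k : ι, Measure.prod μ μ (jointArgmaxSet a b i i) := by simp
    _ = Measure.prod μ μ (jointArgmaxSet a b i i) +
          ∑ _k ∈ Finset.univ.erase j, Measure.prod μ μ (jointArgmaxSet a b i i) :=
        (Finset.add_sum_erase _ _ (Finset.mem_univ j)).symm
    _ < Measure.prod μ μ (jointArgmaxSet a b i j) +
          ∑ k ∈ Finset.univ.erase j, Measure.prod μ μ (jointArgmaxSet a b i k) :=
        ENNReal.add_lt_add_of_lt_of_le (ENNReal.sum_ne_top.2 fun _ _ => measure_ne_top _ _)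
          (measure_jointArgmaxSet_self_lt b ha hij)
          (Finset.sum_le_sum fun k _ => measure_jointArgmaxSet_self_le b ha.le i k)
    _ = ∑ k, Measure.prod μ μ (jointArgmaxSet a b i k) :=
        Finset.add_sum_erase _ (fun k => Measure.prod μ μ (jointArgmaxSet a b i k))
          (Finset.mem_univ j)
    _ ≤ _ := sum_measure_jointArgmaxSet_le (Or.inl ha.ne) i

end IID

theorem stmt_3_general (ℓ : ℕ) (hℓ : 2 ≤ ℓ) (a : ℝ) (ha1 : a ≤ 0) :
    (ℓ : ℝ) * Pl ℓ a ≤ 1 / (ℓ : ℝ) ∧ ((ℓ : ℝ) * Pl ℓ a = 1 / (ℓ : ℝ) → a = 0) := by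
  have := nullSingletonClass_gaussianReal (μ := 0) one_ne_zero
  have := (gaussianReal_absolutelyContinuous' 0 one_ne_zero).isOpenPosMeasure
  have hℓ0 : ℓ ≠ 0 := by omega
  set μ := Measure.pi fun _ : Fin ℓ => gaussianReal 0 1
  set i : Fin ℓ := ⟨0, by omega⟩
  have hlhs : (ℓ : ℝ) * Pl ℓ a = ((Fintype.card (Fin ℓ) : ENNReal) *
      μ.prod μ (jointArgmaxSet a √(1 - a ^ 2) i i)).toReal := by
    rw [Pl, dif_neg hℓ0, ENNReal.toReal_mul, ENNReal.toReal_natCast, Fintype.card_fin]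
    congr 3
    ext p
    exact forall_and
  have hrhs : 1 / (ℓ : ℝ) = ((Fintype.card (Fin ℓ) : ENNReal)⁻¹).toReal := by simp
  have hfin : (Fintype.card (Fin ℓ) : ENNReal)⁻¹ ≠ ⊤ := by simp [hℓ0]
  rw [hlhs, hrhs]
  refine ⟨ENNReal.toReal_mono hfin (card_mul_measure_jointArgmaxSet_le ha1 ?_ i), fun heq => ?_⟩
  · rcases eq_or_ne a 0 with rfl | ha
    exacts [Or.inr (by simp), Or.inl ha]
  · by_contra ha
    have hi : i ≠ ⟨1, by omega⟩ := by simp [i, Fin.ext_iff]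
    exact (ENNReal.toReal_strict_mono hfin (card_mul_measure_jointArgmaxSet_lt _
      (lt_of_le_of_ne ha1 ha) hi)).ne heq

/-- For -1 ≤ a ≤ 0, N_ℓ(a) = ℓ·P_ℓ(a) ≤ 1/ℓ, with equality only at a = 0. -/
theorem stmt_3 (ℓ : ℕ) (hℓ : 2 ≤ ℓ) (a : ℝ) (ha0 : -1 ≤ a) (ha1 : a ≤ 0) :
    (ℓ : ℝ) * Pl ℓ a ≤ 1 / (ℓ : ℝ) ∧ ((ℓ : ℝ) * Pl ℓ a = 1 / (ℓ : ℝ) → a = 0) :=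
  stmt_3_general ℓ hℓ a ha1
end

section
/- Let n ≥ 1 and ℓ ≥ 1 be integers, and let u, v ∈ ℝⁿ be unit vectors with inner product a = ⟨u, v⟩. Let x₁, …, x_ℓ be i.i.d. standard Gaussian random vectors in ℝⁿ (formally, the product over c ∈ {1,…,ℓ} of the standard Gaussian measure on ℝⁿ, itself the product of n copies of the standard Gaussian measure on ℝ). Then the probability of the event that ⟨u, x₁⟩ ≥ ⟨u, x_c⟩ and ⟨v, x₁⟩ ≥ ⟨v, x_c⟩ hold for all c ∈ {2, …, ℓ} equals P_ℓ(a). -/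
/-!
For unit vectors `u, v` and a standard Gaussian vector `x`, the pair `(⟪u, x⟫, ⟪v, x⟫)` is
Gaussian. Write `v = a • u + b • w` with `a = ⟪u, v⟫`, `b = ‖v - a • u‖ = √(1 - a²)` and `w` a unit
vector orthogonal to `u` (when `b ≠ 0`). Then `⟪u, x⟫` and `⟪w, x⟫` are uncorrelated, hence
independent standard normals, so the pair has the law of `(s, a s + b t)` for independent standard
normals `s, t`. Applying this to each of the `ℓ` i.i.d. vectors turns the event into the one
defining `P_ℓ(a)`.
-/

open MeasureTheory ProbabilityTheory

open scoped RealInnerProductSpace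

lemma norm_sub_inner_smul_sq {E : Type*} [NormedAddCommGroup E] [InnerProductSpace ℝ E]
    {u v : E} (hu : ‖u‖ = 1) (hv : ‖v‖ = 1) :
    ‖v - ⟪u, v⟫ • u‖ ^ 2 = 1 - ⟪u, v⟫ ^ 2 := by
  rw [norm_sub_sq_real, norm_smul, inner_smul_right, real_inner_comm, hu, hv, Real.norm_eq_abs,
    mul_one, sq_abs]
  ring

section stdGaussian

variable {E : Type*} [NormedAddCommGroup E] [InnerProductSpace ℝ E] [FiniteDimensional ℝ E]
  [MeasurableSpace E] [BorelSpace E]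

lemma stdGaussian_map_inner (u : E) :
    (stdGaussian E).map (fun x ↦ ⟪u, x⟫) = gaussianReal 0 (‖u‖₊ ^ 2) := by
  have h := IsGaussian.map_eq_gaussianReal (μ := stdGaussian E) (innerSL ℝ u)
  rw [integral_strongDual_stdGaussian, variance_dual_stdGaussian, innerSL_apply_norm,
    ← coe_nnnorm, ← NNReal.coe_pow, Real.toNNReal_coe] at h
  exact h

lemma stdGaussian_map_inner_pair_of_orthogonal {u w : E} (hu : ‖u‖ = 1) (hw : ‖w‖ = 1)
    (huw : ⟪u, w⟫ = 0) :
    (stdGaussian E).map (fun x ↦ (⟪u, x⟫, ⟪w, x⟫)) =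
      (gaussianReal 0 1).prod (gaussianReal 0 1) := by
  have hlaw : HasGaussianLaw (fun x : E ↦ (⟪u, x⟫, ⟪w, x⟫)) (stdGaussian E) :=
    IsGaussian.hasGaussianLaw_id.map_fun ((innerSL ℝ u).prod (innerSL ℝ w))
  have hcov : cov[fun x ↦ ⟪u, x⟫, fun x ↦ ⟪w, x⟫; stdGaussian E] = 0 := by
    rw [← covarianceBilin_apply_eq_cov IsGaussian.memLp_two_id, covarianceBilin_stdGaussian,
      innerSL_apply_apply, huw]
  rw [(indepFun_iff_map_prod_eq_prod_map_map (by fun_prop) (by fun_prop)).1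
      (hlaw.indepFun_of_covariance_eq_zero hcov),
    stdGaussian_map_inner, stdGaussian_map_inner,
    show ‖u‖₊ = 1 from Subtype.ext hu, show ‖w‖₊ = 1 from Subtype.ext hw, one_pow]

lemma stdGaussian_map_inner_pair {u v : E} (hu : ‖u‖ = 1) (hv : ‖v‖ = 1) :
    (stdGaussian E).map (fun x ↦ (⟪u, x⟫, ⟪v, x⟫)) =
      ((gaussianReal 0 1).prod (gaussianReal 0 1)).map
        (fun p ↦ (p.1, ⟪u, v⟫ * p.1 + √(1 - ⟪u, v⟫ ^ 2) * p.2)) := by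
  set a := ⟪u, v⟫
  rw [← norm_sub_inner_smul_sq hu hv, Real.sqrt_sq (norm_nonneg _)]
  rcases eq_or_ne ‖v - a • u‖ 0 with h0 | hpos
  · have hv' : v = a • u := sub_eq_zero.1 (norm_eq_zero.1 h0)
    have hl : (fun x ↦ (⟪u, x⟫, ⟪v, x⟫)) = (fun s ↦ (s, a * s)) ∘ (fun x : E ↦ ⟪u, x⟫) := by
      ext x <;> simp [hv', inner_smul_left]
    have hr : (fun p : ℝ × ℝ ↦ (p.1, a * p.1 + 0 * p.2)) = (fun s ↦ (s, a * s)) ∘ Prod.fst := by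
      ext <;> simp
    rw [h0, hl, hr, ← Measure.map_map (by fun_prop) (by fun_prop),
      ← Measure.map_map (by fun_prop) (by fun_prop), Measure.map_fst_prod,
      stdGaussian_map_inner, show ‖u‖₊ = 1 from Subtype.ext hu]
    simp
  · set w := ‖v - a • u‖⁻¹ • (v - a • u)
    have hw : ‖w‖ = 1 := by simp [w, norm_smul, hpos]
    have huw : ⟪u, w⟫ = 0 := by simp [w, inner_smul_right, inner_sub_right, hu, a]
    have hvw : v = a • u + ‖v - a • u‖ • w := by simp [w, smul_smul, hpos]
    have hl : (fun x ↦ (⟪u, x⟫, ⟪v, x⟫)) =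
        (fun p : ℝ × ℝ ↦ (p.1, a * p.1 + ‖v - a • u‖ * p.2)) ∘ (fun x : E ↦ (⟪u, x⟫, ⟪w, x⟫)) := by
      ext x
      · rfl
      · conv_lhs => rw [hvw]
        simp [inner_add_left, inner_smul_left]
    rw [hl, ← Measure.map_map (by fun_prop) (by fun_prop),
      stdGaussian_map_inner_pair_of_orthogonal hu hw huw]

end stdGaussian

section EuclideanSpace

variable {ι : Type*} [Fintype ι]

lemma pi_gaussianReal_eq_map_ofLp :
    Measure.pi (fun _ : ι ↦ gaussianReal 0 1) =
      (stdGaussian (EuclideanSpace ℝ ι)).map (WithLp.ofLp (p := 2)) := by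
  rw [← map_pi_eq_stdGaussian, Measure.map_map (by fun_prop) (by fun_prop)]
  exact Measure.map_id.symm

lemma EuclideanSpace.inner_toLp_eq_dotProduct (u : ι → ℝ) (x : EuclideanSpace ℝ ι) :
    ⟪WithLp.toLp 2 u, x⟫ = u ⬝ᵥ x.ofLp := by
  simp [EuclideanSpace.inner_eq_star_dotProduct, dotProduct_comm]

lemma EuclideanSpace.norm_toLp_eq_sqrt_dotProduct (u : ι → ℝ) :
    ‖WithLp.toLp 2 u‖ = √(u ⬝ᵥ u) := by
  rw [norm_eq_sqrt_real_inner, EuclideanSpace.inner_toLp_eq_dotProduct, WithLp.ofLp_toLp]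

lemma pi_gaussianReal_map_dotProduct_pair {u v : ι → ℝ} (hu : u ⬝ᵥ u = 1) (hv : v ⬝ᵥ v = 1) :
    (Measure.pi fun _ : ι ↦ gaussianReal 0 1).map (fun x ↦ (u ⬝ᵥ x, v ⬝ᵥ x)) =
      ((gaussianReal 0 1).prod (gaussianReal 0 1)).map
        (fun p ↦ (p.1, u ⬝ᵥ v * p.1 + √(1 - (u ⬝ᵥ v) ^ 2) * p.2)) := by
  have h := stdGaussian_map_inner_pair (u := WithLp.toLp 2 u) (v := WithLp.toLp 2 v)
    (by rw [EuclideanSpace.norm_toLp_eq_sqrt_dotProduct, hu, Real.sqrt_one])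
    (by rw [EuclideanSpace.norm_toLp_eq_sqrt_dotProduct, hv, Real.sqrt_one])
  simp only [EuclideanSpace.inner_toLp_eq_dotProduct] at h
  rw [pi_gaussianReal_eq_map_ofLp, Measure.map_map (by fun_prop) (by fun_prop)]
  exact h

end EuclideanSpace

lemma measure_pi_preimage_eq_of_map_eq {ι α β γ : Type*} [Fintype ι] [MeasurableSpace α]
    [MeasurableSpace β] [MeasurableSpace γ] {μ : Measure α} {ν : Measure β}
    [IsFiniteMeasure μ] [IsFiniteMeasure ν] {f : α → γ} {g : β → γ}
    (hf : Measurable f) (hg : Measurable g) (h : μ.map f = ν.map g) {A : Set (ι → γ)}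
    (hA : MeasurableSet A) :
    Measure.pi (fun _ ↦ μ) {x | (fun i ↦ f (x i)) ∈ A} =
      Measure.pi (fun _ ↦ ν) {y | (fun i ↦ g (y i)) ∈ A} :=
  calc Measure.pi (fun _ ↦ μ) {x | (fun i ↦ f (x i)) ∈ A}
      = (Measure.pi fun _ ↦ μ).map (fun x i ↦ f (x i)) A :=
        (Measure.map_apply (by fun_prop) hA).symm
    _ = (Measure.pi fun _ ↦ ν).map (fun y i ↦ g (y i)) A := by
        rw [Measure.pi_map_pi (fun _ ↦ hf.aemeasurable),
          Measure.pi_map_pi (fun _ ↦ hg.aemeasurable), h]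
    _ = Measure.pi (fun _ ↦ ν) {y | (fun i ↦ g (y i)) ∈ A} := Measure.map_apply (by fun_prop) hA

theorem stmt_6_general (n ℓ : ℕ) (hℓ : 0 < ℓ)
    (u v : Fin n → ℝ) (hu : ∑ i, u i * u i = 1) (hv : ∑ i, v i * v i = 1)
    (a : ℝ) (ha : a = ∑ i, u i * v i) :
    ((Measure.pi fun _ : Fin ℓ => (Measure.pi fun _ : Fin n => gaussianReal 0 1))
      {x | ∀ c : Fin ℓ,
        (∑ i, u i * x c i) ≤ (∑ i, u i * x ⟨0, hℓ⟩ i) ∧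
        (∑ i, v i * x c i) ≤ (∑ i, v i * x ⟨0, hℓ⟩ i)}).toReal = Pl ℓ a := by
  subst ha
  set A : Set (Fin ℓ → ℝ × ℝ) := {q | ∀ c, (q c).1 ≤ (q ⟨0, hℓ⟩).1 ∧ (q c).2 ≤ (q ⟨0, hℓ⟩).2}
  have hA : MeasurableSet A := by
    simp only [A, Set.ofPred_forall, Set.ofPred_and]
    exact .iInter fun c ↦ (measurableSet_le (by fun_prop) (by fun_prop)).inter
      (measurableSet_le (by fun_prop) (by fun_prop))
  set g : ℝ × ℝ → ℝ × ℝ := fun p ↦ (p.1, u ⬝ᵥ v * p.1 + √(1 - (u ⬝ᵥ v) ^ 2) * p.2)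
  have hS : MeasurableSet {p : (Fin ℓ → ℝ) × (Fin ℓ → ℝ) | (fun c ↦ g (p.1 c, p.2 c)) ∈ A} :=
    hA.preimage (by fun_prop)
  rw [Pl, dif_neg hℓ.ne']
  congr 1
  calc _ = Measure.pi (fun _ ↦ (gaussianReal 0 1).prod (gaussianReal 0 1))
          {y | (fun c ↦ g (y c)) ∈ A} :=
        measure_pi_preimage_eq_of_map_eq (by fun_prop) (by fun_prop)
          (pi_gaussianReal_map_dotProduct_pair hu hv) hA
    _ = _ := (measurePreserving_arrowProdEquivProdArrow ℝ ℝ (Fin ℓ) _ _).measure_preimage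
          hS.nullMeasurableSet

/-- For unit vectors `u, v ∈ ℝⁿ` with `⟨u,v⟩ = a` and `x₁,…,x_ℓ` i.i.d. standard
Gaussian vectors in `ℝⁿ`, the probability that `⟨u,x₁⟩ ≥ ⟨u,x_c⟩` and
`⟨v,x₁⟩ ≥ ⟨v,x_c⟩` for all `c` equals `P_ℓ(a)`. -/
theorem stmt_6 (n ℓ : ℕ) (hn : 1 ≤ n) (hℓ : 0 < ℓ)
    (u v : Fin n → ℝ) (hu : ∑ i, u i * u i = 1) (hv : ∑ i, v i * v i = 1)
    (a : ℝ) (ha : a = ∑ i, u i * v i) :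
    ((Measure.pi fun _ : Fin ℓ => (Measure.pi fun _ : Fin n => gaussianReal 0 1))
      {x | ∀ c : Fin ℓ,
        (∑ i, u i * x c i) ≤ (∑ i, u i * x ⟨0, hℓ⟩ i) ∧
        (∑ i, v i * x c i) ≤ (∑ i, v i * x ⟨0, hℓ⟩ i)}).toReal = Pl ℓ a :=
  stmt_6_general n ℓ hℓ u v hu hv a ha
end

section
/- Define F_T(x) = x²·(1 + T·ln x) for x > 0 and F_T(0) = 0. There exists an absolute constant T₀ > 0 such that: for every real T with 0 < T ≤ T₀, every integer ℓ ≥ 1 with ℓ < e^{1/T}, and all nonnegative reals x₁, …, x_ℓ with x₁ + ⋯ + x_ℓ = 1, one has ∑_{i=1}^ℓ F_T(x_i) ≥ 1/ℓ - T·(ln ℓ)/ℓ - 4·ℓ·e^{-1/T}. -/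
/-!
The tangent line of `F T` at `p = 1/ℓ` lies below the whole graph on `[0, ∞)` as soon as
`1 + T ln p ≥ 0`, i.e. `T ln ℓ ≤ 1`, which `ℓ < e^{1/T}` guarantees: the gap is at least
`(1 + T ln p + T)(x - p)²` because `ln (x/p) ≥ 1 - p/x`. Summing the tangent inequality over
a probability vector cancels the linear terms and gives `∑ F T (xᵢ) ≥ ℓ F T (1/ℓ) = (1 - T ln ℓ)/ℓ`,
which is stronger than the claim for every `T > 0`.
-/

/-- `F T x = x²(1 + T ln x)` for `x > 0`, with `F T 0 = 0`. -/
noncomputable def F (T x : ℝ) : ℝ :=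
  if x = 0 then 0 else x ^ 2 * (1 + T * Real.log x)

open Real Finset

/-- `F T 0 = 0` agrees with the formula because `Real.log 0 = 0`. -/
lemma F_eq_sq_mul (T x : ℝ) : F T x = x ^ 2 * (1 + T * log x) := by
  unfold F
  split_ifs with hx
  · simp [hx]
  · rfl

lemma mul_sub_le_sq_mul_log_sub_log {p x : ℝ} (hp : 0 < p) (hx : 0 ≤ x) :
    x * (x - p) ≤ x ^ 2 * (log x - log p) := by
  rcases hx.eq_or_lt with rfl | hx
  · simp
  have h := one_sub_inv_le_log_of_pos (div_pos hx hp)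
  rw [log_div hx.ne' hp.ne', inv_div] at h
  calc x * (x - p) = x ^ 2 * (1 - p / x) := by field_simp
    _ ≤ x ^ 2 * (log x - log p) := by gcongr

lemma F_tangent_le {T p x : ℝ} (hT : 0 ≤ T) (hp : 0 < p) (hTp : 0 ≤ 1 + T * log p)
    (hx : 0 ≤ x) :
    F T p + p * (2 + 2 * T * log p + T) * (x - p) ≤ F T x := by
  rw [F_eq_sq_mul, F_eq_sq_mul]
  have hlog := mul_sub_le_sq_mul_log_sub_log hp hx
  nlinarith [mul_le_mul_of_nonneg_left hlog hT, mul_nonneg hTp (sq_nonneg (x - p)),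
    mul_nonneg hT (sq_nonneg (x - p))]

lemma card_mul_F_inv_card_le_sum {ι : Type*} [Fintype ι] [Nonempty ι] {T : ℝ} (hT : 0 ≤ T)
    (hTι : T * log (Fintype.card ι) ≤ 1) {x : ι → ℝ} (hx : ∀ i, 0 ≤ x i)
    (hsum : ∑ i, x i = 1) :
    Fintype.card ι * F T (1 / Fintype.card ι) ≤ ∑ i, F T (x i) := by
  set n : ℝ := (Fintype.card ι : ℝ)
  have hn : 0 < n := Nat.cast_pos.2 Fintype.card_pos
  have hlog : log (1 / n) = -log n := by rw [one_div, log_inv]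
  have hTp : 0 ≤ 1 + T * log (1 / n) := by rw [hlog]; linarith
  set c := (1 / n) * (2 + 2 * T * log (1 / n) + T)
  have hlinear : ∑ i, c * (x i - 1 / n) = 0 := by
    rw [← mul_sum, sum_sub_distrib, hsum, sum_const, card_univ, nsmul_eq_mul]
    field_simp
    ring
  calc n * F T (1 / n) = ∑ i, (F T (1 / n) + c * (x i - 1 / n)) := by
        rw [sum_add_distrib, hlinear, sum_const, card_univ, nsmul_eq_mul, add_zero]
    _ ≤ ∑ i, F T (x i) :=
        sum_le_sum fun i _ => F_tangent_le hT (by positivity) hTp (hx i)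

lemma natCast_mul_F_inv (T : ℝ) {n : ℕ} (hn : n ≠ 0) :
    n * F T (1 / n) = 1 / n - T * log n / n := by
  rw [F_eq_sq_mul, one_div, log_inv]
  field_simp
  ring

/-- There is an absolute constant `T₀ > 0` such that for `0 < T ≤ T₀`, `ℓ ≥ 1` with
`ℓ < e^{1/T}`, and nonnegative `x₁,…,x_ℓ` summing to 1, we have
`∑ F T (x i) ≥ 1/ℓ - T ln ℓ/ℓ - 4ℓ e^{-1/T}`. -/
theorem stmt_8 :
    ∃ T₀ : ℝ, 0 < T₀ ∧
      ∀ T : ℝ, 0 < T → T ≤ T₀ →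
        ∀ ℓ : ℕ, 1 ≤ ℓ → (ℓ : ℝ) < Real.exp (1 / T) →
          ∀ x : Fin ℓ → ℝ, (∀ i, 0 ≤ x i) → (∑ i, x i) = 1 →
            (∑ i, F T (x i)) ≥
              1 / (ℓ : ℝ) - T * Real.log ℓ / ℓ - 4 * (ℓ : ℝ) * Real.exp (-1 / T) := by
  refine ⟨1, one_pos, fun T hT _ ℓ hℓ hℓT x hx hsum => ?_⟩
  have : NeZero ℓ := ⟨by omega⟩
  have hTℓ : T * log ℓ ≤ 1 := by
    have := (log_lt_iff_lt_exp (by positivity)).2 hℓT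
    rw [lt_div_iff₀ hT] at this
    linarith
  have hbound := card_mul_F_inv_card_le_sum hT.le (by simpa using hTℓ) hx hsum
  rw [Fintype.card_fin, natCast_mul_F_inv T (NeZero.ne ℓ)] at hbound
  have : 0 ≤ 4 * (ℓ : ℝ) * exp (-1 / T) := by positivity
  linarith
end

section
/- There exists a real ρ₀ > 0 such that for every real ρ with 0 ≤ ρ ≤ ρ₀ and every real μ with 0 < μ < 1, one has Λ_ρ(μ) ≤ μ² + 3ρ. -/
/-!
Conditioning on `x`, `Λ_ρ` is the integral over `x ≤ u` of `Φ((u - ρx)/s)` with `s = √(1-ρ²)`.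
The standard normal density is at most `1/2`, so shifting the argument of `Φ` by `ρx` costs at
most `ρ|x|`; dividing a point `t ≥ 0` by `s` costs at most `(1/s - 1) t φ(t) ≤ (1/s - 1)/2 ≤ ρ²`,
because `t φ(t) ≤ 1/2`. Integrating over `x ≤ u` gives `Λ_ρ ≤ Φ(u)² + ρ² + ρ 𝔼|x|`, and
`𝔼|x| ≤ (1 + 𝔼x²)/2 = 1`.
-/

open MeasureTheory ProbabilityTheory

/-- The standard normal cumulative distribution function. -/
noncomputable def stdPhi (u : ℝ) : ℝ := ((gaussianReal 0 1) (Set.Iic u)).toReal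

/-- `Lam ρ u`: for independent standard normals `x, z`, the probability that
`x ≤ u` and `ρ·x + √(1-ρ²)·z ≤ u`.  With `Φ(u) = μ` this is `Λ_ρ(μ)`. -/
noncomputable def Lam (ρ u : ℝ) : ℝ :=
  (((gaussianReal 0 1).prod (gaussianReal 0 1))
    {p | p.1 ≤ u ∧ ρ * p.1 + Real.sqrt (1 - ρ ^ 2) * p.2 ≤ u}).toReal

open Real Set

lemma gaussianPDFReal_zero_one (x : ℝ) :
    gaussianPDFReal 0 1 x = (√(2 * π))⁻¹ * exp (-x ^ 2 / 2) := by
  simp [gaussianPDFReal]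

lemma inv_sqrt_two_mul_pi_le_half : (√(2 * π))⁻¹ ≤ 1 / 2 := by
  have h2 : (2 : ℝ) ≤ √(2 * π) := (le_sqrt' two_pos).2 (by nlinarith [pi_gt_three])
  rw [one_div]
  exact inv_anti₀ two_pos h2

lemma gaussianPDFReal_zero_one_le_half (x : ℝ) : gaussianPDFReal 0 1 x ≤ 1 / 2 := by
  rw [gaussianPDFReal_zero_one]
  calc (√(2 * π))⁻¹ * exp (-x ^ 2 / 2) ≤ (√(2 * π))⁻¹ * 1 := by
        gcongr; rw [exp_le_one_iff]; nlinarith [sq_nonneg x]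
    _ ≤ 1 / 2 := by simpa using inv_sqrt_two_mul_pi_le_half

lemma mul_gaussianPDFReal_zero_one_le_half (x : ℝ) : x * gaussianPDFReal 0 1 x ≤ 1 / 2 := by
  have hx : x ≤ exp (x ^ 2 / 2) := by nlinarith [add_one_le_exp (x ^ 2 / 2), sq_nonneg (x - 1)]
  have hxe : x * exp (-x ^ 2 / 2) ≤ 1 := by
    rw [neg_div, exp_neg, ← div_eq_mul_inv, div_le_one (exp_pos _)]
    exact hx
  rw [gaussianPDFReal_zero_one, mul_left_comm]
  calc (√(2 * π))⁻¹ * (x * exp (-x ^ 2 / 2)) ≤ (√(2 * π))⁻¹ * 1 := by gcongr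
    _ ≤ 1 / 2 := by simpa using inv_sqrt_two_mul_pi_le_half

lemma antitoneOn_gaussianPDFReal_zero_one : AntitoneOn (gaussianPDFReal 0 1) (Ici 0) := by
  intro a ha b _hb hab
  simp only [gaussianPDFReal_zero_one]
  gcongr

lemma stdPhi_mono : Monotone stdPhi := fun _ _ hab =>
  ENNReal.toReal_mono (measure_ne_top _ _) (measure_mono (Iic_subset_Iic.2 hab))

lemma stdPhi_sub_eq_integral {a b : ℝ} (hab : a ≤ b) :
    stdPhi b - stdPhi a = ∫ x in Ioc a b, gaussianPDFReal 0 1 x := by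
  have hsplit := measure_union (μ := gaussianReal 0 1)
    (Iic_disjoint_Ioc (le_refl a) (c := b)) measurableSet_Ioc
  rw [Iic_union_Ioc_eq_Iic hab] at hsplit
  rw [stdPhi, stdPhi, hsplit, ENNReal.toReal_add (measure_ne_top _ _) (measure_ne_top _ _),
    gaussianReal_apply_eq_integral 0 one_ne_zero (Ioc a b),
    ENNReal.toReal_ofReal (integral_nonneg fun x => gaussianPDFReal_nonneg 0 1 x)]
  ring

lemma stdPhi_sub_le_of_gaussianPDFReal_le {a b c : ℝ} (hab : a ≤ b)
    (hc : ∀ x ∈ Ioc a b, gaussianPDFReal 0 1 x ≤ c) :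
    stdPhi b - stdPhi a ≤ (b - a) * c := by
  rw [stdPhi_sub_eq_integral hab]
  calc ∫ x in Ioc a b, gaussianPDFReal 0 1 x ≤ ∫ _ in Ioc a b, c :=
        setIntegral_mono_on (integrable_gaussianPDFReal 0 1).integrableOn
          (integrableOn_const measure_Ioc_lt_top.ne) measurableSet_Ioc hc
    _ = (b - a) * c := by
        rw [setIntegral_const, measureReal_def, volume_Ioc, smul_eq_mul,
          ENNReal.toReal_ofReal (sub_nonneg.2 hab)]

lemma stdPhi_le_add_abs_sub (a b : ℝ) : stdPhi b ≤ stdPhi a + |b - a| / 2 := by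
  rcases le_total b a with hba | hab
  · linarith [stdPhi_mono hba, abs_nonneg (b - a)]
  · have := stdPhi_sub_le_of_gaussianPDFReal_le hab fun x _ => gaussianPDFReal_zero_one_le_half x
    rw [abs_of_nonneg (sub_nonneg.2 hab)]
    linarith

lemma stdPhi_div_le {s : ℝ} (hs0 : 0 < s) (hs1 : s ≤ 1) (t : ℝ) :
    stdPhi (t / s) ≤ stdPhi t + (s⁻¹ - 1) / 2 := by
  have hs : 0 ≤ s⁻¹ - 1 := sub_nonneg.2 (one_le_inv₀ hs0 |>.2 hs1)
  rcases lt_or_ge t 0 with ht | ht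
  · have hts : t / s ≤ t := by rw [div_le_iff₀ hs0]; nlinarith
    linarith [stdPhi_mono hts]
  · have hts : t ≤ t / s := le_div_self ht hs0 hs1
    have hdensity := stdPhi_sub_le_of_gaussianPDFReal_le hts fun x hx =>
      antitoneOn_gaussianPDFReal_zero_one ht (ht.trans hx.1.le) hx.1.le
    calc stdPhi (t / s) ≤ stdPhi t + (t / s - t) * gaussianPDFReal 0 1 t := by linarith
      _ = stdPhi t + (s⁻¹ - 1) * (t * gaussianPDFReal 0 1 t) := by ring
      _ ≤ stdPhi t + (s⁻¹ - 1) * (1 / 2) := by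
          gcongr; exact mul_gaussianPDFReal_zero_one_le_half t
      _ = stdPhi t + (s⁻¹ - 1) / 2 := by ring

lemma stdPhi_sub_mul_div_sqrt_le {ρ : ℝ} (hρ0 : 0 ≤ ρ) (hρ : ρ ≤ 1 / 2) (u x : ℝ) :
    stdPhi ((u - ρ * x) / √(1 - ρ ^ 2)) ≤ stdPhi u + ρ ^ 2 + ρ * |x| := by
  set s := √(1 - ρ ^ 2)
  have hs2 : s ^ 2 = 1 - ρ ^ 2 := sq_sqrt (by nlinarith)
  have hs1 : s ≤ 1 := sqrt_le_one.2 (by nlinarith)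
  have hs_half : 1 / 2 ≤ s := by nlinarith [sqrt_nonneg (1 - ρ ^ 2)]
  have hs0 : 0 < s := by linarith
  have hscale : (s⁻¹ - 1) / 2 ≤ ρ ^ 2 := by
    rw [div_le_iff₀ two_pos, sub_le_iff_le_add, inv_le_iff_one_le_mul₀ hs0]
    nlinarith
  have hshift : stdPhi (u - ρ * x) ≤ stdPhi u + ρ * |x| := by
    have := stdPhi_le_add_abs_sub u (u - ρ * x)
    rw [show u - ρ * x - u = -(ρ * x) by ring, abs_neg, abs_mul, abs_of_nonneg hρ0] at this
    nlinarith [abs_nonneg x]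
  linarith [stdPhi_div_le hs0 hs1 (u - ρ * x)]

lemma integral_sq_gaussianReal_zero_one : ∫ x, x ^ 2 ∂gaussianReal 0 1 = 1 := by
  rw [← variance_of_integral_eq_zero aemeasurable_id' integral_id_gaussianReal,
    variance_fun_id_gaussianReal, NNReal.coe_one]

lemma integral_abs_gaussianReal_zero_one_le : ∫ x, |x| ∂gaussianReal 0 1 ≤ 1 := by
  have hsq : Integrable (fun x : ℝ => x ^ 2) (gaussianReal 0 1) :=
    (memLp_id_gaussianReal 2).integrable_sq
  calc ∫ x, |x| ∂gaussianReal 0 1 ≤ ∫ x, (1 + x ^ 2) / 2 ∂gaussianReal 0 1 :=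
        integral_mono (memLp_one_iff_integrable.1 (memLp_id_gaussianReal' 1 (by simp))).abs
          (((integrable_const 1).add hsq).div_const 2) fun x => by
            nlinarith [sq_abs x, sq_nonneg (|x| - 1)]
    _ = 1 := by
        rw [integral_div, integral_add (integrable_const 1) hsq,
          integral_sq_gaussianReal_zero_one]
        simp

lemma Lam_eq_setIntegral {ρ : ℝ} (hρ : ρ ^ 2 < 1) (u : ℝ) :
    Lam ρ u = ∫ x in Iic u, stdPhi ((u - ρ * x) / √(1 - ρ ^ 2)) ∂gaussianReal 0 1 := by
  set γ := gaussianReal 0 1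
  set s := √(1 - ρ ^ 2)
  have hs : 0 < s := sqrt_pos.2 (by linarith)
  set E : Set (ℝ × ℝ) := {p | p.1 ≤ u ∧ ρ * p.1 + s * p.2 ≤ u}
  have hE : MeasurableSet E :=
    (measurableSet_le measurable_fst measurable_const).inter
      (measurableSet_le (f := fun p : ℝ × ℝ => ρ * p.1 + s * p.2) (by fun_prop)
        measurable_const)
  have hslice : ∀ x, (γ (Prod.mk x ⁻¹' E)).toReal
      = (Iic u).indicator (fun x => stdPhi ((u - ρ * x) / s)) x := by
    intro x
    by_cases hx : x ≤ u
    · have : Prod.mk x ⁻¹' E = Iic ((u - ρ * x) / s) := by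
        ext z
        simp only [E, mem_preimage, mem_ofPred_eq, mem_Iic, le_div_iff₀ hs, hx, true_and]
        constructor <;> intro h <;> linarith
      rw [this, indicator_of_mem (mem_Iic.2 hx)]
      rfl
    · have : Prod.mk x ⁻¹' E = ∅ := by
        ext z
        simp [E, hx]
      rw [this, indicator_of_notMem (by simpa using hx)]
      simp
  rw [Lam, Measure.prod_apply hE, ← integral_toReal
    (measurable_measure_prodMk_left hE).aemeasurable (ae_of_all _ fun _ => measure_lt_top _ _),
    ← integral_indicator measurableSet_Iic]
  exact integral_congr_ae (ae_of_all _ hslice)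

lemma Lam_le {ρ : ℝ} (hρ0 : 0 ≤ ρ) (hρ : ρ ≤ 1 / 2) (u : ℝ) :
    Lam ρ u ≤ stdPhi u ^ 2 + ρ ^ 2 + ρ := by
  set γ := gaussianReal 0 1
  have habs : Integrable (fun x => |x|) γ :=
    (memLp_one_iff_integrable.1 (memLp_id_gaussianReal' 1 (by simp))).abs
  have hint : Integrable (fun x => ρ ^ 2 + ρ * |x|) γ :=
    (integrable_const _).fun_add (habs.const_mul ρ)
  calc Lam ρ u = ∫ x in Iic u, stdPhi ((u - ρ * x) / √(1 - ρ ^ 2)) ∂γ :=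
        Lam_eq_setIntegral (by nlinarith) u
    _ ≤ ∫ x in Iic u, (stdPhi u + (ρ ^ 2 + ρ * |x|)) ∂γ :=
        integral_mono_of_nonneg (ae_of_all _ fun _ => ENNReal.toReal_nonneg)
          ((integrable_const _).fun_add hint).integrableOn
          (ae_of_all _ fun x => by linarith [stdPhi_sub_mul_div_sqrt_le hρ0 hρ u x])
    _ = stdPhi u * stdPhi u + ∫ x in Iic u, (ρ ^ 2 + ρ * |x|) ∂γ := by
        rw [integral_add (integrable_const _) hint.integrableOn, setIntegral_const, smul_eq_mul]
        rfl
    _ ≤ stdPhi u * stdPhi u + ∫ x, (ρ ^ 2 + ρ * |x|) ∂γ := by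
        linarith [setIntegral_le_integral (s := Iic u) hint (ae_of_all _ fun x => by positivity)]
    _ = stdPhi u ^ 2 + ρ ^ 2 + ρ * ∫ x, |x| ∂γ := by
        rw [integral_add (integrable_const _) (habs.const_mul ρ), integral_const,
          integral_const_mul, probReal_univ, one_smul]
        ring
    _ ≤ stdPhi u ^ 2 + ρ ^ 2 + ρ := by
        nlinarith [integral_abs_gaussianReal_zero_one_le]

/-- There is `ρ₀ > 0` such that for `0 ≤ ρ ≤ ρ₀` and `0 < μ < 1`, `Λ_ρ(μ) ≤ μ² + 3ρ`. -/
theorem stmt_9 :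
    ∃ ρ₀ : ℝ, 0 < ρ₀ ∧
      ∀ ρ : ℝ, 0 ≤ ρ → ρ ≤ ρ₀ →
        ∀ μ : ℝ, 0 < μ → μ < 1 →
          ∀ u : ℝ, stdPhi u = μ → Lam ρ u ≤ μ ^ 2 + 3 * ρ := by
  refine ⟨1 / 2, by norm_num, fun ρ hρ0 hρ μ _ _ u hu => ?_⟩
  calc Lam ρ u ≤ μ ^ 2 + ρ ^ 2 + ρ := hu ▸ Lam_le hρ0 hρ u
    _ ≤ μ ^ 2 + 3 * ρ := by nlinarith
end

section
/- For every integer k ≥ 6 there exists a k² × k² real matrix T, with rows and columns indexed by pairs (x₁,x₂) ∈ [k] × [k], such that: T is symmetric; all entries of T are nonnegative integer multiples of 1/((k-1)(k-2)(k-3)); every row of T sums to 1; T((x₁,x₂),(y₁,y₂)) = 0 whenever {x₁,x₂} ∩ {y₁,y₂} ≠ ∅ (colourfulness); and for every vector v ∈ ℝ^{k²} with ∑ v = 0, ‖T·v‖₂ ≤ (4/(k-1))·‖v‖₂ (i.e. the spectral radius of T is at most 4/(k-1)). -/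
/-!
Write `n` for the number of colours and `vertexLift g h` for the function on pairs that is
`h u` at `(u, u)` and `g u + g w` at `(u, w)`, `u ≠ w`. The sum-zero functions split orthogonally
into the multiples of one constant-coefficient `vertexLift`, the `vertexLift g h` with `g` and `h`
of mean zero, and the functions vanishing on the diagonal whose row-plus-column sums all vanish.
The operator preserves each piece: it acts on the first as `-1/(n-1)`, sends `vertexLift g h` to
`-1/(n-1) • vertexLift (2g + h/(n-2)) (2g)`, which at most quadruples the norm
`‖h‖² + (2n-4)‖g‖²` of `vertexLift g h`, and acts on the third as `c ↦ a (c + cᵀ)` with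
`a = 1/((n-1)(n-3)) ≤ 2/(n-1)`.
-/

open Finset Matrix

noncomputable section

theorem dotProduct_self_add_add {κ R : Type*} [Fintype κ] [CommSemiring R] {x y z : κ → R}
    (hxy : x ⬝ᵥ y = 0) (hxz : x ⬝ᵥ z = 0) (hyz : y ⬝ᵥ z = 0) :
    (x + y + z) ⬝ᵥ (x + y + z) = x ⬝ᵥ x + y ⬝ᵥ y + z ⬝ᵥ z := by
  simp only [add_dotProduct, dotProduct_add, dotProduct_comm y x, dotProduct_comm z x,
    dotProduct_comm z y, hxy, hxz, hyz]
  ring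

theorem sum_compl_eq_sub {ι : Type*} [Fintype ι] [DecidableEq ι] (X : Finset ι) (G : ι → ℝ) :
    ∑ i ∈ Xᶜ, G i = ∑ i, G i - ∑ i ∈ X, G i :=
  eq_sub_of_add_eq (sum_compl_add_sum X G)

namespace PairFun

section

variable {ι : Type*} [DecidableEq ι]

def vertexLift (g h : ι → ℝ) : ι × ι → ℝ := fun x => if x.1 = x.2 then h x.1 else g x.1 + g x.2

theorem vertexLift_eq_add_ite (g h : ι → ℝ) (x : ι × ι) :
    vertexLift g h x = g x.1 + g x.2 + if x.1 = x.2 then h x.1 - 2 * g x.1 else 0 := by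
  unfold vertexLift; split_ifs with hx
  · rw [hx]; ring
  · ring

@[simp]
theorem vertexLift_diag (g h : ι → ℝ) (u : ι) : vertexLift g h (u, u) = h u := if_pos rfl

theorem vertexLift_of_ne (g h : ι → ℝ) {u w : ι} (huw : u ≠ w) :
    vertexLift g h (u, w) = g u + g w := if_neg huw

theorem sum_sum_ite_eq_mul (S : Finset ι) (p q : ℝ) (F : ι × ι → ℝ) :
    ∑ s ∈ S, ∑ t ∈ S, (if s = t then p else q) * F (s, t) =
      q * ∑ s ∈ S, ∑ t ∈ S, F (s, t) + (p - q) * ∑ u ∈ S, F (u, u) := by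
  have split : ∀ s t, (if s = t then p else q) * F (s, t) =
      q * F (s, t) + if s = t then (p - q) * F (s, t) else 0 := by
    intro s t; split_ifs <;> ring
  simp only [split, sum_add_distrib, ← mul_sum, sum_ite_eq, sum_ite_mem, inter_self]

end

variable {ι : Type*} [Fintype ι]

def crossSum (f : ι × ι → ℝ) (u : ι) : ℝ := ∑ t, (f (u, t) + f (t, u))

theorem sum_crossSum (f : ι × ι → ℝ) : ∑ u, crossSum f u = 2 * ∑ x, f x := by
  simp only [crossSum, sum_add_distrib, ← Fintype.sum_prod_type]
  rw [Fintype.sum_prod_type_right]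
  ring

theorem crossSum_sub (f f' : ι × ι → ℝ) (u : ι) :
    crossSum (f - f') u = crossSum f u - crossSum f' u := by
  simp only [crossSum, Pi.sub_apply, ← sum_sub_distrib]
  exact sum_congr rfl fun _ _ => by ring

theorem dotProduct_self_add_swap_le (f : ι × ι → ℝ) :
    (f + f ∘ Prod.swap) ⬝ᵥ (f + f ∘ Prod.swap) ≤ 4 * (f ⬝ᵥ f) := by
  have swap_sum : ∑ x : ι × ι, f x.swap * f x.swap = ∑ x, f x * f x :=
    (Equiv.prodComm ι ι).sum_comp fun x => f x * f x
  calc (f + f ∘ Prod.swap) ⬝ᵥ (f + f ∘ Prod.swap) = ∑ x, (f x + f x.swap) ^ 2 := by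
        simp only [dotProduct, Pi.add_apply, Function.comp_apply, sq]
    _ ≤ ∑ x, (2 * (f x * f x) + 2 * (f x.swap * f x.swap)) :=
        sum_le_sum fun x _ => by nlinarith [sq_nonneg (f x - f x.swap)]
    _ = 4 * (f ⬝ᵥ f) := by
        rw [sum_add_distrib, ← mul_sum, ← mul_sum, swap_sum, dotProduct]; ring

/-- The orthogonal complement of the image of `vertexLift`. -/
def IsCrossBalanced (c : ι × ι → ℝ) : Prop := (∀ u, c (u, u) = 0) ∧ ∀ u, crossSum c u = 0

namespace IsCrossBalanced

variable {c : ι × ι → ℝ}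

theorem sum_eq_zero (hc : IsCrossBalanced c) : ∑ x, c x = 0 := by
  have := sum_crossSum c
  simp only [hc.2, sum_const_zero] at this
  linarith

theorem add_swap (hc : IsCrossBalanced c) : IsCrossBalanced (c + c ∘ Prod.swap) := by
  refine ⟨fun u => by simp [hc.1 u], fun u => ?_⟩
  have h := hc.2 u
  simp only [crossSum, Pi.add_apply, Function.comp_apply, Prod.swap_prod_mk, sum_add_distrib]
    at h ⊢
  linarith

end IsCrossBalanced

variable [DecidableEq ι]

theorem sum_compl_sum_compl (X : Finset ι) (F : ι × ι → ℝ) :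
    ∑ s ∈ Xᶜ, ∑ t ∈ Xᶜ, F (s, t) =
      ∑ y, F y - ∑ u ∈ X, crossSum F u + ∑ s ∈ X, ∑ t ∈ X, F (s, t) := by
  simp only [sum_compl_eq_sub, sum_sub_distrib, crossSum, sum_add_distrib, Fintype.sum_prod_type]
  rw [sum_comm (s := univ) (t := X) (f := fun s t => F (s, t))]
  ring

theorem vertexLift_dotProduct (g h : ι → ℝ) (w : ι × ι → ℝ) :
    vertexLift g h ⬝ᵥ w = ∑ u, g u * crossSum w u + ∑ u, (h u - 2 * g u) * w (u, u) := by
  simp only [dotProduct, vertexLift_eq_add_ite, add_mul, ite_mul, zero_mul, sum_add_distrib,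
    Fintype.sum_prod_type, crossSum, mul_add, mul_sum]
  rw [sum_comm (f := fun s t => g t * w (s, t))]
  simp [sum_ite_eq]

theorem crossSum_vertexLift (g h : ι → ℝ) (u : ι) :
    crossSum (vertexLift g h) u = 2 * (h u + (Fintype.card ι - 2) * g u + ∑ t, g t) := by
  simp only [crossSum, vertexLift_eq_add_ite, sum_add_distrib, sum_const, card_univ, nsmul_eq_mul]
  simp [sum_ite_eq', eq_comm (a := u)]
  ring

theorem sum_vertexLift (g h : ι → ℝ) :
    ∑ x, vertexLift g h x = ∑ u, h u + 2 * (Fintype.card ι - 1) * ∑ u, g u := by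
  have := sum_crossSum (vertexLift g h)
  simp only [crossSum_vertexLift, ← mul_sum, sum_add_distrib, sum_const, card_univ,
    nsmul_eq_mul] at this
  linarith

theorem vertexLift_dotProduct_self (g h : ι → ℝ) :
    vertexLift g h ⬝ᵥ vertexLift g h =
      ∑ u, h u ^ 2 + (2 * Fintype.card ι - 4) * ∑ u, g u ^ 2 + 2 * (∑ u, g u) ^ 2 := by
  have pointwise : ∀ u, g u * crossSum (vertexLift g h) u + (h u - 2 * g u) * vertexLift g h (u, u)
      = h u ^ 2 + (2 * Fintype.card ι - 4) * g u ^ 2 + 2 * (∑ t, g t) * g u := by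
    intro u; rw [crossSum_vertexLift, vertexLift_diag]; ring
  rw [vertexLift_dotProduct, ← sum_add_distrib]
  simp only [pointwise, sum_add_distrib, ← mul_sum]
  ring

theorem vertexLift_dotProduct_of_isCrossBalanced (g h : ι → ℝ) {c : ι × ι → ℝ}
    (hc : IsCrossBalanced c) : vertexLift g h ⬝ᵥ c = 0 := by
  simp [vertexLift_dotProduct, hc.1, hc.2]

theorem vertexLift_dotProduct_vertexLift_const {g h : ι → ℝ} (hg : ∑ u, g u = 0)
    (hh : ∑ u, h u = 0) (α β : ℝ) :
    vertexLift g h ⬝ᵥ vertexLift (fun _ => α) (fun _ => β) = 0 := by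
  simp only [vertexLift_dotProduct, crossSum_vertexLift, vertexLift_diag, ← sum_mul,
    sum_sub_distrib, ← mul_sum, hg, hh]
  ring

theorem exists_eq_vertexLift_const_add_vertexLift_add (hn : 2 < Fintype.card ι)
    (v : ι × ι → ℝ) (hv : ∑ x, v x = 0) :
    ∃ (α : ℝ) (g h : ι → ℝ) (c : ι × ι → ℝ), ∑ u, g u = 0 ∧ ∑ u, h u = 0 ∧
      IsCrossBalanced c ∧
      v = vertexLift (fun _ => α) (fun _ => -2 * (Fintype.card ι - 1) * α) +
        vertexLift g h + c := by
  set n : ℝ := (Fintype.card ι : ℝ) with n_def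
  have hn' : (2 : ℝ) < n := by rw [n_def]; exact_mod_cast hn
  have hn0 : n ≠ 0 := by linarith
  have hn1 : n - 1 ≠ 0 := by linarith
  have hn2 : n - 2 ≠ 0 := by linarith
  -- `α` and `h` come from the diagonal of `v`, `g` from its cross sums: the rest is balanced
  set D := ∑ u, v (u, u)
  set α := -D / (2 * n * (n - 1))
  set g : ι → ℝ := fun u => (crossSum v u / 2 - v (u, u) + D / n) / (n - 2)
  set h : ι → ℝ := fun u => v (u, u) - D / n
  have hg : ∑ u, g u = 0 := by
    simp only [g, ← sum_div, sum_add_distrib, sum_sub_distrib, sum_crossSum, hv,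
      sum_const, card_univ, nsmul_eq_mul]
    field_simp
    ring
  have hh : ∑ u, h u = 0 := by
    simp only [h, sum_sub_distrib, sum_const, card_univ, nsmul_eq_mul]
    field_simp
    ring
  refine ⟨α, g, h, v - vertexLift (fun _ => α) (fun _ => -2 * (n - 1) * α) - vertexLift g h,
    hg, hh, ⟨fun u => ?_, fun u => ?_⟩, by abel⟩
  · simp only [Pi.sub_apply, vertexLift_diag, h, α]
    field_simp
    ring
  · rw [crossSum_sub, crossSum_sub, crossSum_vertexLift, crossSum_vertexLift, hg, ← n_def]
    simp only [g, h, α, sum_const, card_univ, nsmul_eq_mul, ← n_def]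
    field_simp
    ring

end PairFun

open PairFun

section Operator

variable (ι : Type*) [Fintype ι] [DecidableEq ι]

def diagWeight : ℝ := ((Fintype.card ι - 1) * (Fintype.card ι - 2))⁻¹

def offDiagWeight : ℝ := ((Fintype.card ι - 1) * (Fintype.card ι - 3))⁻¹

/-- The weights make every row sum to `1`: a diagonal vertex `(u, u)` has `(n - 1)(n - 2)`
neighbours, all off-diagonal, and an off-diagonal vertex has `n - 2` diagonal and
`(n - 2)(n - 3)` off-diagonal ones. -/
def colourfulWeight (x y : ι × ι) : ℝ :=
  if x.1 = x.2 ∧ y.1 = y.2 then 0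
  else if x.1 = x.2 ∨ y.1 = y.2 then diagWeight ι else offDiagWeight ι

def colourfulOp : Matrix (ι × ι) (ι × ι) ℝ :=
  of fun x y => if Disjoint ({x.1, x.2} : Finset ι) {y.1, y.2} then colourfulWeight ι x y else 0

variable {ι}

theorem colourfulOp_isSymm : (colourfulOp ι).IsSymm := by
  refine IsSymm.ext fun x y => ?_
  simp only [colourfulOp, of_apply, disjoint_comm (a := ({y.1, y.2} : Finset ι)), colourfulWeight,
    and_comm (a := y.1 = y.2), or_comm (a := y.1 = y.2)]

theorem colourfulOp_apply_of_not_disjoint {x y : ι × ι}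
    (hxy : ¬Disjoint ({x.1, x.2} : Finset ι) {y.1, y.2}) : colourfulOp ι x y = 0 :=
  if_neg hxy

theorem colourfulOp_mulVec_apply (f : ι × ι → ℝ) (x : ι × ι) :
    (colourfulOp ι *ᵥ f) x =
      ∑ s ∈ {x.1, x.2}ᶜ, ∑ t ∈ {x.1, x.2}ᶜ, colourfulWeight ι x (s, t) * f (s, t) := by
  have hdisj : ∀ y : ι × ι, Disjoint ({x.1, x.2} : Finset ι) {y.1, y.2} ↔
      y ∈ ({x.1, x.2}ᶜ : Finset ι) ×ˢ {x.1, x.2}ᶜ := by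
    intro y; simp [disjoint_insert_right]
  simp only [mulVec, dotProduct, colourfulOp, of_apply, hdisj, ite_mul, zero_mul]
  rw [sum_ite_mem, univ_inter, sum_product]

theorem colourfulOp_mulVec_apply_diag (f : ι × ι → ℝ) (u : ι) :
    (colourfulOp ι *ᵥ f) (u, u) = diagWeight ι *
      (∑ y, f y - crossSum f u + 2 * f (u, u) - ∑ t, f (t, t)) := by
  have weight : ∀ s t : ι, colourfulWeight ι (u, u) (s, t) =
      if s = t then 0 else diagWeight ι := by
    intro s t; simp [colourfulWeight]
  simp only [colourfulOp_mulVec_apply, weight]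
  rw [sum_sum_ite_eq_mul, sum_compl_sum_compl, sum_compl_eq_sub, pair_eq_singleton]
  simp only [sum_singleton]
  ring

theorem colourfulOp_mulVec_apply_of_ne (f : ι × ι → ℝ) {u w : ι} (huw : u ≠ w) :
    (colourfulOp ι *ᵥ f) (u, w) =
      offDiagWeight ι * (∑ y, f y - crossSum f u - crossSum f w +
          f (u, u) + f (u, w) + f (w, u) + f (w, w)) +
        (diagWeight ι - offDiagWeight ι) * (∑ t, f (t, t) - f (u, u) - f (w, w)) := by
  have weight : ∀ s t : ι, colourfulWeight ι (u, w) (s, t) =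
      if s = t then diagWeight ι else offDiagWeight ι := by
    intro s t; simp [colourfulWeight, huw]
  simp only [colourfulOp_mulVec_apply, weight]
  rw [sum_sum_ite_eq_mul, sum_compl_sum_compl, sum_compl_eq_sub]
  simp only [sum_pair huw]
  ring

theorem colourfulOp_apply_eq_nat_div (hn : 3 < Fintype.card ι) (x y : ι × ι) :
    ∃ m : ℕ, colourfulOp ι x y =
      m / ((Fintype.card ι - 1) * (Fintype.card ι - 2) * (Fintype.card ι - 3)) := by
  have hn' : (3 : ℝ) < Fintype.card ι := by exact_mod_cast hn
  have h2 : ((Fintype.card ι - 2 : ℕ) : ℝ) = Fintype.card ι - 2 := by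
    rw [Nat.cast_sub (by omega)]; norm_num
  have h3 : ((Fintype.card ι - 3 : ℕ) : ℝ) = Fintype.card ι - 3 := by
    rw [Nat.cast_sub (by omega)]; norm_num
  have diag : diagWeight ι = ((Fintype.card ι - 3 : ℕ) : ℝ) /
      ((Fintype.card ι - 1) * (Fintype.card ι - 2) * (Fintype.card ι - 3)) := by
    rw [h3, diagWeight]; field_simp [show (Fintype.card ι : ℝ) - 3 ≠ 0 by linarith]
  have offDiag : offDiagWeight ι = ((Fintype.card ι - 2 : ℕ) : ℝ) /
      ((Fintype.card ι - 1) * (Fintype.card ι - 2) * (Fintype.card ι - 3)) := by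
    rw [h2, offDiagWeight]; field_simp [show (Fintype.card ι : ℝ) - 2 ≠ 0 by linarith]
  simp only [colourfulOp, of_apply, colourfulWeight]
  split_ifs
  exacts [⟨0, by simp⟩, ⟨_, diag⟩, ⟨_, offDiag⟩, ⟨0, by simp⟩]

theorem colourfulOp_sum_apply (hn : 3 < Fintype.card ι) (x : ι × ι) :
    ∑ y, colourfulOp ι x y = 1 := by
  have hn' : (3 : ℝ) < Fintype.card ι := by exact_mod_cast hn
  have hsum : ∑ y, colourfulOp ι x y = (colourfulOp ι *ᵥ fun _ => 1) x := by
    simp [mulVec, dotProduct]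
  have hcross : ∀ u, crossSum (fun _ : ι × ι => (1 : ℝ)) u = 2 * Fintype.card ι := by
    intro u; simp [crossSum]; ring
  obtain ⟨u, w⟩ := x
  rw [hsum]
  rcases eq_or_ne u w with rfl | huw
  · rw [colourfulOp_mulVec_apply_diag, hcross, diagWeight]
    simp only [sum_const, card_univ, Fintype.card_prod, nsmul_eq_mul, Nat.cast_mul, mul_one]
    field_simp [show (Fintype.card ι : ℝ) - 1 ≠ 0 by linarith,
      show (Fintype.card ι : ℝ) - 2 ≠ 0 by linarith]
    ring
  · rw [colourfulOp_mulVec_apply_of_ne _ huw, hcross, hcross, diagWeight, offDiagWeight]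
    simp only [sum_const, card_univ, Fintype.card_prod, nsmul_eq_mul, Nat.cast_mul, mul_one]
    field_simp [show (Fintype.card ι : ℝ) - 1 ≠ 0 by linarith,
      show (Fintype.card ι : ℝ) - 2 ≠ 0 by linarith, show (Fintype.card ι : ℝ) - 3 ≠ 0 by linarith]
    ring

theorem colourfulOp_mulVec_vertexLift (hn : 3 < Fintype.card ι) (g h : ι → ℝ) :
    colourfulOp ι *ᵥ vertexLift g h = vertexLift
      (fun u => (∑ t, g t - 2 * g u) / (Fintype.card ι - 1) +
        ((∑ t, h t) / 2 - h u) / ((Fintype.card ι - 1) * (Fintype.card ι - 2)))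
      (fun u => 2 * (∑ t, g t - g u) / (Fintype.card ι - 1)) := by
  have hn' : (3 : ℝ) < Fintype.card ι := by exact_mod_cast hn
  have hn1 : (Fintype.card ι : ℝ) - 1 ≠ 0 := by linarith
  have hn2 : (Fintype.card ι : ℝ) - 2 ≠ 0 := by linarith
  have hn3 : (Fintype.card ι : ℝ) - 3 ≠ 0 := by linarith
  funext ⟨u, w⟩
  rcases eq_or_ne u w with rfl | huw
  · rw [colourfulOp_mulVec_apply_diag, sum_vertexLift, crossSum_vertexLift]
    simp only [vertexLift_diag, diagWeight]
    field_simp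
    ring
  · rw [colourfulOp_mulVec_apply_of_ne _ huw, sum_vertexLift, crossSum_vertexLift,
      crossSum_vertexLift, vertexLift_of_ne _ _ huw, vertexLift_of_ne _ _ huw.symm,
      vertexLift_of_ne _ _ huw]
    simp only [vertexLift_diag, diagWeight, offDiagWeight]
    field_simp
    ring

theorem colourfulOp_mulVec_vertexLift_const (hn : 3 < Fintype.card ι) (α : ℝ) :
    colourfulOp ι *ᵥ vertexLift (fun _ => α) (fun _ => -2 * (Fintype.card ι - 1) * α) =
      (-(Fintype.card ι - 1 : ℝ)⁻¹) •
        vertexLift (fun _ => α) (fun _ => -2 * (Fintype.card ι - 1) * α) := by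
  have hn' : (3 : ℝ) < Fintype.card ι := by exact_mod_cast hn
  have hn1 : (Fintype.card ι : ℝ) - 1 ≠ 0 := by linarith
  have hn2 : (Fintype.card ι : ℝ) - 2 ≠ 0 := by linarith
  rw [colourfulOp_mulVec_vertexLift hn]
  funext x
  simp only [vertexLift, sum_const, card_univ, nsmul_eq_mul, Pi.smul_apply, smul_eq_mul]
  split_ifs
  · field_simp
  · field_simp; ring

theorem colourfulOp_mulVec_vertexLift_of_sum_eq_zero (hn : 3 < Fintype.card ι) {g h : ι → ℝ}
    (hg : ∑ u, g u = 0) (hh : ∑ u, h u = 0) :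
    colourfulOp ι *ᵥ vertexLift g h = (-(Fintype.card ι - 1 : ℝ)⁻¹) •
      vertexLift (fun u => 2 * g u + h u / (Fintype.card ι - 2)) (fun u => 2 * g u) := by
  have hn' : (3 : ℝ) < Fintype.card ι := by exact_mod_cast hn
  have hn1 : (Fintype.card ι : ℝ) - 1 ≠ 0 := by linarith
  have hn2 : (Fintype.card ι : ℝ) - 2 ≠ 0 := by linarith
  rw [colourfulOp_mulVec_vertexLift hn, hg, hh]
  funext x
  simp only [vertexLift, Pi.smul_apply, smul_eq_mul]
  split_ifs <;> field_simp <;> ring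

theorem colourfulOp_mulVec_of_isCrossBalanced {c : ι × ι → ℝ} (hc : IsCrossBalanced c) :
    colourfulOp ι *ᵥ c = offDiagWeight ι • (c + c ∘ Prod.swap) := by
  funext ⟨u, w⟩
  rcases eq_or_ne u w with rfl | huw
  · simp [colourfulOp_mulVec_apply_diag, hc.sum_eq_zero, hc.1, hc.2]
  · simp [colourfulOp_mulVec_apply_of_ne _ huw, hc.sum_eq_zero, hc.1, hc.2]

theorem colourfulOp_mulVec_vertexLift_dotProduct_self_le (hn : 3 < Fintype.card ι)
    {g h : ι → ℝ} (hg : ∑ u, g u = 0) (hh : ∑ u, h u = 0) :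
    (colourfulOp ι *ᵥ vertexLift g h) ⬝ᵥ (colourfulOp ι *ᵥ vertexLift g h) ≤
      (4 / (Fintype.card ι - 1)) ^ 2 * (vertexLift g h ⬝ᵥ vertexLift g h) := by
  set m : ℝ := Fintype.card ι - 2 with m_def
  have hm : 1 ≤ m := by rw [m_def, le_sub_iff_add_le]; exact_mod_cast hn.le
  have pointwise : ∀ a b : ℝ,
      (2 * a) ^ 2 + 2 * m * (2 * a + b / m) ^ 2 ≤ 16 * (b ^ 2 + 2 * m * a ^ 2) := by
    intro a b
    obtain ⟨q, rfl⟩ : ∃ q, b = m * q := ⟨b / m, by field_simp⟩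
    rw [mul_div_cancel_left₀ _ (by positivity)]
    -- the slack is `m (20a² - 8aq + 14q²) + 4(m - 1)a² + 16m(m - 1)q²`
    nlinarith [mul_nonneg (by positivity : 0 ≤ m) (by nlinarith [sq_nonneg (a - q)] :
      0 ≤ 20 * a ^ 2 - 8 * a * q + 14 * q ^ 2), mul_nonneg (sub_nonneg.2 hm) (sq_nonneg a),
      mul_nonneg (mul_nonneg (by positivity : 0 ≤ m) (sub_nonneg.2 hm)) (sq_nonneg q)]
  have hsum : ∑ u, (2 * g u + h u / m) = 0 := by
    simp [sum_add_distrib, ← mul_sum, ← sum_div, hg, hh]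
  have two_m : 2 * (Fintype.card ι : ℝ) - 4 = 2 * m := by rw [m_def]; ring
  have contraction : ∑ u, (2 * g u) ^ 2 + 2 * m * ∑ u, (2 * g u + h u / m) ^ 2 ≤
      16 * (∑ u, h u ^ 2 + 2 * m * ∑ u, g u ^ 2) := by
    simp only [mul_sum, ← sum_add_distrib]
    exact sum_le_sum fun u _ => pointwise _ _
  rw [colourfulOp_mulVec_vertexLift_of_sum_eq_zero hn hg hh, smul_dotProduct, dotProduct_smul,
    smul_eq_mul, smul_eq_mul, vertexLift_dotProduct_self, vertexLift_dotProduct_self, ← m_def,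
    hsum, hg, two_m]
  calc _ = (Fintype.card ι - 1 : ℝ)⁻¹ ^ 2 *
        (∑ u, (2 * g u) ^ 2 + 2 * m * ∑ u, (2 * g u + h u / m) ^ 2) := by ring
    _ ≤ (Fintype.card ι - 1 : ℝ)⁻¹ ^ 2 * (16 * (∑ u, h u ^ 2 + 2 * m * ∑ u, g u ^ 2)) :=
        mul_le_mul_of_nonneg_left contraction (sq_nonneg _)
    _ = _ := by ring

theorem colourfulOp_mulVec_dotProduct_self_le_of_isCrossBalanced (hn : 3 < Fintype.card ι)
    {c : ι × ι → ℝ} (hc : IsCrossBalanced c) :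
    (colourfulOp ι *ᵥ c) ⬝ᵥ (colourfulOp ι *ᵥ c) ≤
      (4 / (Fintype.card ι - 1)) ^ 2 * (c ⬝ᵥ c) := by
  have hn' : (4 : ℝ) ≤ Fintype.card ι := by exact_mod_cast hn
  have hc0 : 0 ≤ c ⬝ᵥ c := sum_nonneg fun _ _ => mul_self_nonneg _
  have weight : 4 * offDiagWeight ι ^ 2 ≤ (4 / (Fintype.card ι - 1)) ^ 2 := by
    have h3 : ((Fintype.card ι - 3 : ℝ)⁻¹) ^ 2 ≤ 1 :=
      pow_le_one₀ (inv_nonneg.2 (by linarith)) (inv_le_one_of_one_le₀ (by linarith))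
    have h1 : 0 ≤ ((Fintype.card ι - 1 : ℝ)⁻¹) ^ 2 := sq_nonneg _
    rw [offDiagWeight, div_pow, mul_inv, mul_pow, div_eq_mul_inv, ← inv_pow]
    nlinarith
  rw [colourfulOp_mulVec_of_isCrossBalanced hc, smul_dotProduct, dotProduct_smul,
    smul_eq_mul, smul_eq_mul, ← mul_assoc, ← sq]
  calc offDiagWeight ι ^ 2 * ((c + c ∘ Prod.swap) ⬝ᵥ (c + c ∘ Prod.swap))
      ≤ offDiagWeight ι ^ 2 * (4 * (c ⬝ᵥ c)) :=
        mul_le_mul_of_nonneg_left (dotProduct_self_add_swap_le c) (sq_nonneg _)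
    _ ≤ _ := by nlinarith

theorem colourfulOp_mulVec_dotProduct_self_le (hn : 3 < Fintype.card ι) {v : ι × ι → ℝ}
    (hv : ∑ x, v x = 0) :
    (colourfulOp ι *ᵥ v) ⬝ᵥ (colourfulOp ι *ᵥ v) ≤ (4 / (Fintype.card ι - 1)) ^ 2 * (v ⬝ᵥ v) := by
  have hn' : (3 : ℝ) < Fintype.card ι := by exact_mod_cast hn
  obtain ⟨α, g, h, c, hg, hh, hc, rfl⟩ :=
    exists_eq_vertexLift_const_add_vertexLift_add (by omega) v hv
  set A := vertexLift (fun _ : ι => α) (fun _ => -2 * (Fintype.card ι - 1 : ℝ) * α)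
  have hTA := colourfulOp_mulVec_vertexLift_const hn α
  have hTB := colourfulOp_mulVec_vertexLift_of_sum_eq_zero hn hg hh
  have hTc := colourfulOp_mulVec_of_isCrossBalanced hc
  have hsum : ∑ u, (2 * g u + h u / (Fintype.card ι - 2)) = 0 := by
    simp [sum_add_distrib, ← mul_sum, ← sum_div, hg, hh]
  have hsum' : ∑ u, 2 * g u = 0 := by rw [← mul_sum, hg, mul_zero]
  have boundA : (colourfulOp ι *ᵥ A) ⬝ᵥ (colourfulOp ι *ᵥ A) ≤
      (4 / (Fintype.card ι - 1)) ^ 2 * (A ⬝ᵥ A) := by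
    rw [hTA, smul_dotProduct, dotProduct_smul, smul_eq_mul, smul_eq_mul, ← mul_assoc]
    refine mul_le_mul_of_nonneg_right ?_ (sum_nonneg fun _ _ => mul_self_nonneg _)
    rw [neg_mul_neg, ← sq, div_pow, inv_pow, div_eq_mul_inv]
    have : (0 : ℝ) ≤ ((Fintype.card ι - 1 : ℝ) ^ 2)⁻¹ := by positivity
    linarith
  rw [mulVec_add, mulVec_add, dotProduct_self_add_add, dotProduct_self_add_add]
  · linarith [colourfulOp_mulVec_vertexLift_dotProduct_self_le hn hg hh,
      colourfulOp_mulVec_dotProduct_self_le_of_isCrossBalanced hn hc]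
  · rw [dotProduct_comm]; exact vertexLift_dotProduct_vertexLift_const hg hh _ _
  · exact vertexLift_dotProduct_of_isCrossBalanced _ _ hc
  · exact vertexLift_dotProduct_of_isCrossBalanced _ _ hc
  · rw [hTA, hTB, smul_dotProduct, dotProduct_smul, dotProduct_comm,
      vertexLift_dotProduct_vertexLift_const hsum hsum', smul_zero, smul_zero]
  · rw [hTA, hTc, smul_dotProduct, dotProduct_smul,
      vertexLift_dotProduct_of_isCrossBalanced _ _ hc.add_swap, smul_zero, smul_zero]
  · rw [hTB, hTc, smul_dotProduct, dotProduct_smul,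
      vertexLift_dotProduct_of_isCrossBalanced _ _ hc.add_swap, smul_zero, smul_zero]

theorem sqrt_sum_colourfulOp_mulVec_sq_le (hn : 3 < Fintype.card ι) {v : ι × ι → ℝ}
    (hv : ∑ x, v x = 0) :
    √(∑ x, (colourfulOp ι *ᵥ v) x ^ 2) ≤ 4 / (Fintype.card ι - 1) * √(∑ x, v x ^ 2) := by
  have hn' : (3 : ℝ) < Fintype.card ι := by exact_mod_cast hn
  have sum_sq : ∀ f : ι × ι → ℝ, ∑ x, f x ^ 2 = f ⬝ᵥ f := fun f => by simp [dotProduct, sq]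
  have hscale : (0 : ℝ) ≤ 4 / (Fintype.card ι - 1) := div_nonneg zero_le_four (by linarith)
  rw [sum_sq, sum_sq, ← Real.sqrt_sq hscale, ← Real.sqrt_mul (sq_nonneg _)]
  exact Real.sqrt_le_sqrt (colourfulOp_mulVec_dotProduct_self_le hn hv)

end Operator

end

/-- For every `k ≥ 6` there is a colourful symmetric Markov operator on `[k]×[k]`
whose entries are nonnegative integer multiples of `1/((k-1)(k-2)(k-3))` and whose
spectral radius is at most `4/(k-1)`. -/
theorem stmt_12 (k : ℕ) (hk : 6 ≤ k) :
    ∃ T : Matrix (Fin k × Fin k) (Fin k × Fin k) ℝ,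
      T.IsSymm ∧
      (∀ x y, ∃ m : ℕ, T x y = (m : ℝ) / (((k : ℝ) - 1) * ((k : ℝ) - 2) * ((k : ℝ) - 3))) ∧
      (∀ x, ∑ y, T x y = 1) ∧
      (∀ x y : Fin k × Fin k,
        (({x.1, x.2} : Finset (Fin k)) ∩ ({y.1, y.2} : Finset (Fin k))).Nonempty → T x y = 0) ∧
      (∀ v : Fin k × Fin k → ℝ, ∑ x, v x = 0 →
        Real.sqrt (∑ x, T.mulVec v x ^ 2) ≤ 4 / ((k : ℝ) - 1) * Real.sqrt (∑ x, v x ^ 2)) := by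
  have hcard : 3 < Fintype.card (Fin k) := by rw [Fintype.card_fin]; omega
  refine ⟨colourfulOp (Fin k), colourfulOp_isSymm, fun x y => ?_, colourfulOp_sum_apply hcard,
    fun x y hxy => colourfulOp_apply_of_not_disjoint (not_disjoint_iff_nonempty_inter.2 hxy),
    fun v hv => ?_⟩
  · simpa using colourfulOp_apply_eq_nat_div hcard x y
  · simpa using sqrt_sum_colourfulOp_mulVec_sq_le hcard hv
end

section
/- Let D ≥ 1, r ≥ 1 be integers, let 0 < ρ < 1, and let T be a symmetric D × D real matrix with nonnegative entries whose rows sum to 1, such that ‖T·v‖₂ ≤ ρ·‖v‖₂ for every v ∈ ℝᴰ with ∑ v = 0 (spectral radius at most ρ). Let f : [D]^r → [0,1] and set μ = E_x[f(x)] (x uniform on [D]^r). Then ⟨f, T^{⊗r} f⟩ ≥ μ² - S_ρ(f), where S_ρ(f) = ⟨f, T_ρ^{⊗r} f⟩ is the noise stability of f at rate ρ. -/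
/-!
Write `T_a` for the Bonami–Beckner operator. These form a semigroup, `T_a T_b = T_{ab}`, with
`T_1 = 1` and `T_0 = J` the averaging projection, and `⟨f, J^{⊗r} f⟩ = μ²`. With `S = T_{√ρ}` and
`Q = T_{1/√ρ} T T_{1/√ρ}` we get `T = S Q S`, `T_ρ = S S`, `J = S J S` and `Q J = J`; moreover `Q`
is an `ℓ²`-contraction, since it fixes constants and acts as `ρ⁻¹ T` on mean-zero vectors. For
`g = S^{⊗r} f` this gives
`⟨f, T^{⊗r} f⟩ - μ² = ⟨g, Q^{⊗r} (g - J^{⊗r} g)⟩ ≥ -‖g‖² = -S_ρ(f)`,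
because contractivity tensorizes and `1 - J^{⊗r}` is an orthogonal projection.
-/

/-- Expectation inner product on functions `[D]^r → ℝ`:
`⟨f,g⟩ = D^{-r} ∑_x f(x)g(x)`. -/
noncomputable def finner (D r : ℕ) (f g : (Fin r → Fin D) → ℝ) : ℝ :=
  (1 / (D : ℝ) ^ r) * ∑ x : Fin r → Fin D, f x * g x

/-- The action of the tensor power `T^{⊗r}` on functions `[D]^r → ℝ`:
`(T^{⊗r} f)(x) = ∑_y (∏_i T (x i) (y i)) f(y)`. -/
noncomputable def tensorAct (D r : ℕ) (T : Matrix (Fin D) (Fin D) ℝ)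
    (f : (Fin r → Fin D) → ℝ) : (Fin r → Fin D) → ℝ :=
  fun x => ∑ y : Fin r → Fin D, (∏ i, T (x i) (y i)) * f y

/-- The Bonami–Beckner operator `T_ρ` on `[D]`. -/
noncomputable def BB (D : ℕ) (ρ : ℝ) : Matrix (Fin D) (Fin D) ℝ :=
  fun x y => if x = y then ρ + (1 - ρ) / D else (1 - ρ) / D

open Matrix

section BonamiBeckner

variable {D : ℕ}

lemma BB_eq_smul_one_add (D : ℕ) (a : ℝ) : BB D a = a • 1 + (1 - a) • BB D 0 := by
  ext x y
  simp only [BB, Matrix.add_apply, Matrix.smul_apply, Matrix.one_apply, smul_eq_mul]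
  split_ifs <;> ring

lemma BB_zero_mulVec (v : Fin D → ℝ) : BB D 0 *ᵥ v = fun _ => (∑ j, v j) / D := by
  ext i
  simp [Matrix.mulVec, dotProduct, BB, ← Finset.mul_sum, div_eq_inv_mul]

lemma BB_zero_mul_BB_zero (hD : D ≠ 0) : BB D 0 * BB D 0 = BB D 0 := by
  ext x y
  simp only [Matrix.mul_apply, BB, sub_zero, one_div, zero_add, ite_self, Finset.sum_const,
    Finset.card_univ, Fintype.card_fin, nsmul_eq_mul]
  field_simp

lemma BB_mul_BB (hD : D ≠ 0) (a b : ℝ) : BB D a * BB D b = BB D (a * b) := by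
  rw [BB_eq_smul_one_add D a, BB_eq_smul_one_add D b, BB_eq_smul_one_add D (a * b)]
  simp only [Matrix.add_mul, Matrix.mul_add, Matrix.smul_mul, Matrix.mul_smul, Matrix.one_mul,
    Matrix.mul_one, BB_zero_mul_BB_zero hD]
  module

lemma BB_one : BB D 1 = 1 := by
  ext x y
  by_cases h : x = y <;> simp [BB, h, Matrix.one_apply]

lemma BB_isSymm (a : ℝ) : (BB D a).IsSymm := by
  ext x y
  simp [BB, eq_comm]

lemma mul_BB_zero {T : Matrix (Fin D) (Fin D) ℝ} (hrow : ∀ i, ∑ j, T i j = 1) :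
    T * BB D 0 = BB D 0 := by
  ext x y
  simp [Matrix.mul_apply, BB, ← Finset.sum_mul, hrow]

lemma BB_mulVec_const_add (hD : D ≠ 0) (a m : ℝ) {w : Fin D → ℝ} (hw : ∑ i, w i = 0) :
    BB D a *ᵥ ((fun _ => m) + w) = (fun _ => m) + a • w := by
  rw [BB_eq_smul_one_add, Matrix.add_mulVec, Matrix.smul_mulVec, Matrix.smul_mulVec,
    Matrix.one_mulVec, BB_zero_mulVec]
  ext i
  simp only [Pi.add_apply, Pi.smul_apply, smul_eq_mul, Finset.sum_add_distrib, Finset.sum_const,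
    Finset.card_univ, Fintype.card_fin, nsmul_eq_mul, hw, add_zero]
  field_simp
  ring

lemma BB_conj_mul_BB_zero (hD : D ≠ 0) {T : Matrix (Fin D) (Fin D) ℝ}
    (hrow : ∀ i, ∑ j, T i j = 1) (c : ℝ) : BB D c * T * BB D c * BB D 0 = BB D 0 := by
  simp only [Matrix.mul_assoc, BB_mul_BB hD, mul_zero, mul_BB_zero hrow]

lemma BB_mul_conj_mul_BB (hD : D ≠ 0) (T : Matrix (Fin D) (Fin D) ℝ) {a : ℝ} (ha : a ≠ 0) :
    BB D a * (BB D a⁻¹ * T * BB D a⁻¹) * BB D a = T := by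
  simp only [← Matrix.mul_assoc, BB_mul_BB hD, mul_inv_cancel₀ ha, BB_one, Matrix.one_mul]
  rw [Matrix.mul_assoc, BB_mul_BB hD, inv_mul_cancel₀ ha, BB_one, Matrix.mul_one]

end BonamiBeckner

section Contraction

variable {D : ℕ} {T : Matrix (Fin D) (Fin D) ℝ}

lemma mulVec_const_add (hrow : ∀ i, ∑ j, T i j = 1) (m : ℝ) (w : Fin D → ℝ) :
    T *ᵥ ((fun _ => m) + w) = (fun _ => m) + T *ᵥ w := by
  rw [Matrix.mulVec_add]
  congr 1
  ext i
  simp [Matrix.mulVec, dotProduct, ← Finset.sum_mul, hrow]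

lemma sum_mulVec_eq_zero (hsymm : T.IsSymm) (hrow : ∀ i, ∑ j, T i j = 1) {w : Fin D → ℝ}
    (hw : ∑ i, w i = 0) : ∑ i, (T *ᵥ w) i = 0 := by
  have hcol : ∀ j, ∑ i, T i j = 1 := fun j => by simpa [hsymm.apply] using hrow j
  simp only [Matrix.mulVec, dotProduct]
  rw [Finset.sum_comm]
  simp [← Finset.sum_mul, hcol, hw]

lemma sum_sq_const_add (m : ℝ) {w : Fin D → ℝ} (hw : ∑ i, w i = 0) :
    ∑ i, ((fun _ => m) + w : Fin D → ℝ) i ^ 2 = D * m ^ 2 + ∑ i, w i ^ 2 := by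
  simp only [Pi.add_apply, add_sq, Finset.sum_add_distrib, ← Finset.mul_sum, hw]
  simp

lemma sum_sq_BB_mul_mul_BB_mulVec_le (hD : D ≠ 0) (hsymm : T.IsSymm)
    (hrow : ∀ i, ∑ j, T i j = 1) {ρ : ℝ} (hρ : 0 ≤ ρ)
    (hspec : ∀ w : Fin D → ℝ, ∑ i, w i = 0 → ∑ i, (T *ᵥ w) i ^ 2 ≤ ρ ^ 2 * ∑ i, w i ^ 2)
    {c : ℝ} (hc : c ^ 2 * ρ ≤ 1) (v : Fin D → ℝ) :
    ∑ i, ((BB D c * T * BB D c) *ᵥ v) i ^ 2 ≤ ∑ i, v i ^ 2 := by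
  set m := (∑ i, v i) / D
  set w := v - fun _ => m
  have hw : ∑ i, w i = 0 := by
    simp only [w, m, Pi.sub_apply, Finset.sum_sub_distrib, Finset.sum_const, Finset.card_univ,
      Fintype.card_fin, nsmul_eq_mul]
    field_simp
    ring
  have hTw : ∑ i, (T *ᵥ (c • w)) i = 0 :=
    sum_mulVec_eq_zero hsymm hrow (by simp [← Finset.mul_sum, hw])
  have hv : v = (fun _ => m) + w := by simp [w]
  have hQv : (BB D c * T * BB D c) *ᵥ v = (fun _ => m) + (c ^ 2) • (T *ᵥ w) := by
    rw [hv, ← Matrix.mulVec_mulVec, ← Matrix.mulVec_mulVec, BB_mulVec_const_add hD c m hw,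
      mulVec_const_add hrow, BB_mulVec_const_add hD c m hTw, Matrix.mulVec_smul, smul_smul, sq]
  have hc4 : (c ^ 2) ^ 2 * ρ ^ 2 ≤ 1 := by nlinarith [mul_nonneg (sq_nonneg c) hρ]
  calc ∑ i, ((BB D c * T * BB D c) *ᵥ v) i ^ 2
      = D * m ^ 2 + (c ^ 2) ^ 2 * ∑ i, (T *ᵥ w) i ^ 2 := by
        have hTw' : ∑ i, ((c ^ 2) • (T *ᵥ w)) i = 0 := by
          simp [← Finset.mul_sum, sum_mulVec_eq_zero hsymm hrow hw]
        rw [hQv, sum_sq_const_add m hTw']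
        simp [mul_pow, Finset.mul_sum]
    _ ≤ D * m ^ 2 + (c ^ 2) ^ 2 * (ρ ^ 2 * ∑ i, w i ^ 2) := by
        gcongr
        exact hspec w hw
    _ ≤ D * m ^ 2 + ∑ i, w i ^ 2 := by
        have : 0 ≤ ∑ i, w i ^ 2 := by positivity
        nlinarith
    _ = ∑ i, v i ^ 2 := by rw [← sum_sq_const_add m hw, ← hv]

end Contraction

section TensorPower

variable {D r : ℕ}

lemma tensorAct_tensorAct (A B : Matrix (Fin D) (Fin D) ℝ) (f : (Fin r → Fin D) → ℝ) :
    tensorAct D r A (tensorAct D r B f) = tensorAct D r (A * B) f := by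
  funext x
  simp only [tensorAct, Finset.mul_sum, Matrix.mul_apply]
  rw [Finset.sum_comm]
  refine Finset.sum_congr rfl fun z _ => ?_
  rw [Fintype.prod_sum, Finset.sum_mul]
  refine Finset.sum_congr rfl fun y _ => ?_
  rw [Finset.prod_mul_distrib]
  ring

lemma tensorAct_sub (A : Matrix (Fin D) (Fin D) ℝ) (f g : (Fin r → Fin D) → ℝ) :
    tensorAct D r A (f - g) = tensorAct D r A f - tensorAct D r A g := by
  funext x
  simp [tensorAct, mul_sub, Finset.sum_sub_distrib]

lemma sum_mul_tensorAct_comm {A : Matrix (Fin D) (Fin D) ℝ} (hA : A.IsSymm)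
    (f g : (Fin r → Fin D) → ℝ) :
    ∑ x, f x * tensorAct D r A g x = ∑ x, tensorAct D r A f x * g x := by
  simp only [tensorAct, Finset.mul_sum, Finset.sum_mul]
  rw [Finset.sum_comm]
  refine Finset.sum_congr rfl fun y _ => Finset.sum_congr rfl fun x _ => ?_
  simp only [hA.apply]
  ring

lemma sum_mul_tensorAct_conj {S : Matrix (Fin D) (Fin D) ℝ} (hS : S.IsSymm)
    (M : Matrix (Fin D) (Fin D) ℝ) (f : (Fin r → Fin D) → ℝ) :
    ∑ x, f x * tensorAct D r (S * M * S) f x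
      = ∑ x, tensorAct D r S f x * tensorAct D r M (tensorAct D r S f) x := by
  rw [← tensorAct_tensorAct, ← tensorAct_tensorAct, sum_mul_tensorAct_comm hS]

lemma sum_fin_cons {α : Type*} [Fintype α] (F : (Fin (r + 1) → α) → ℝ) :
    ∑ x, F x = ∑ a, ∑ y, F (Fin.cons a y) := by
  rw [← (Fin.consEquiv fun _ => α).sum_comp, Fintype.sum_prod_type]
  rfl

lemma tensorAct_cons (A : Matrix (Fin D) (Fin D) ℝ) (g : (Fin (r + 1) → Fin D) → ℝ)
    (a : Fin D) (x : Fin r → Fin D) :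
    tensorAct D (r + 1) A g (Fin.cons a x)
      = ∑ b, A a b * tensorAct D r A (fun y => g (Fin.cons b y)) x := by
  rw [tensorAct, sum_fin_cons]
  simp only [tensorAct, Finset.mul_sum, Fin.prod_univ_succ, Fin.cons_zero, Fin.cons_succ]
  simp only [mul_assoc]

lemma sum_sq_tensorAct_le {A : Matrix (Fin D) (Fin D) ℝ}
    (hA : ∀ v : Fin D → ℝ, ∑ i, (A *ᵥ v) i ^ 2 ≤ ∑ i, v i ^ 2) (g : (Fin r → Fin D) → ℝ) :
    ∑ x, tensorAct D r A g x ^ 2 ≤ ∑ x, g x ^ 2 := by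
  induction r with
  | zero => simp [tensorAct, Subsingleton.elim _ (Fin.elim0 : Fin 0 → Fin D)]
  | succ r ih =>
    let gb : Fin D → (Fin r → Fin D) → ℝ := fun b y => g (Fin.cons b y)
    calc ∑ x, tensorAct D (r + 1) A g x ^ 2
        = ∑ y, ∑ a, (A *ᵥ fun b => tensorAct D r A (gb b) y) a ^ 2 := by
          rw [sum_fin_cons, Finset.sum_comm]
          simp [tensorAct_cons, gb, Matrix.mulVec, dotProduct]
      _ ≤ ∑ y, ∑ b, tensorAct D r A (gb b) y ^ 2 :=
          Finset.sum_le_sum fun y _ => hA _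
      _ = ∑ b, ∑ y, tensorAct D r A (gb b) y ^ 2 := Finset.sum_comm
      _ ≤ ∑ b, ∑ y, gb b y ^ 2 := Finset.sum_le_sum fun b _ => ih (gb b)
      _ = ∑ x, g x ^ 2 := by
          rw [sum_fin_cons]

lemma sum_sq_sub_tensorAct_le {A : Matrix (Fin D) (Fin D) ℝ} (hA : A.IsSymm) (hAA : A * A = A)
    (g : (Fin r → Fin D) → ℝ) :
    ∑ x, (g - tensorAct D r A g) x ^ 2 ≤ ∑ x, g x ^ 2 := by
  have hcross : ∑ x, g x * tensorAct D r A g x = ∑ x, tensorAct D r A g x ^ 2 := by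
    conv_lhs => rw [← hAA, ← tensorAct_tensorAct, sum_mul_tensorAct_comm hA]
    simp only [sq]
  have hexpand : ∑ x, (g - tensorAct D r A g) x ^ 2
      = ∑ x, g x ^ 2 - 2 * ∑ x, g x * tensorAct D r A g x + ∑ x, tensorAct D r A g x ^ 2 := by
    simp only [Pi.sub_apply, sub_sq, Finset.sum_add_distrib, Finset.sum_sub_distrib,
      Finset.mul_sum, mul_assoc]
  have hnonneg : 0 ≤ ∑ x, tensorAct D r A g x ^ 2 := by positivity
  linarith

/-- `Q^{⊗r} - A^{⊗r} = Q^{⊗r} (1 - A^{⊗r})` is a product of two contractions; conclude by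
Cauchy–Schwarz. -/
lemma neg_sum_sq_le_sum_mul_tensorAct_sub {A Q : Matrix (Fin D) (Fin D) ℝ} (hA : A.IsSymm)
    (hAA : A * A = A) (hQA : Q * A = A)
    (hQ : ∀ v : Fin D → ℝ, ∑ i, (Q *ᵥ v) i ^ 2 ≤ ∑ i, v i ^ 2) (g : (Fin r → Fin D) → ℝ) :
    -∑ x, g x ^ 2 ≤ ∑ x, g x * (tensorAct D r Q g - tensorAct D r A g) x := by
  set u := tensorAct D r Q g - tensorAct D r A g
  have hu : u = tensorAct D r Q (g - tensorAct D r A g) := by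
    rw [tensorAct_sub, tensorAct_tensorAct, hQA]
  have hu2 : ∑ x, u x ^ 2 ≤ ∑ x, g x ^ 2 :=
    hu ▸ (sum_sq_tensorAct_le hQ _).trans (sum_sq_sub_tensorAct_le hA hAA g)
  have hg : 0 ≤ ∑ x, g x ^ 2 := by positivity
  refine (abs_le_of_sq_le_sq' ?_ hg).1
  calc (∑ x, g x * u x) ^ 2 ≤ (∑ x, g x ^ 2) * ∑ x, u x ^ 2 :=
        Finset.sum_mul_sq_le_sq_mul_sq _ _ _
    _ ≤ (∑ x, g x ^ 2) ^ 2 := by rw [sq]; gcongr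

lemma sum_mul_tensorAct_sub_le_of_conj {S Q J : Matrix (Fin D) (Fin D) ℝ} (hS : S.IsSymm)
    (hJ : J.IsSymm) (hJJ : J * J = J) (hQJ : Q * J = J)
    (hQ : ∀ v : Fin D → ℝ, ∑ i, (Q *ᵥ v) i ^ 2 ≤ ∑ i, v i ^ 2) (hSJS : S * J * S = J)
    (f : (Fin r → Fin D) → ℝ) :
    ∑ x, f x * tensorAct D r J f x - ∑ x, f x * tensorAct D r (S * S) f x
      ≤ ∑ x, f x * tensorAct D r (S * Q * S) f x := by
  have key := neg_sum_sq_le_sum_mul_tensorAct_sub hJ hJJ hQJ hQ (tensorAct D r S f)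
  simp only [Pi.sub_apply, mul_sub, Finset.sum_sub_distrib] at key
  rw [← sum_mul_tensorAct_conj hS, ← sum_mul_tensorAct_conj hS, hSJS] at key
  have hSS : ∑ x, f x * tensorAct D r (S * S) f x = ∑ x, tensorAct D r S f x ^ 2 := by
    rw [← tensorAct_tensorAct, sum_mul_tensorAct_comm hS]
    simp only [sq]
  linarith

lemma finner_tensorAct_BB_zero (f : (Fin r → Fin D) → ℝ) :
    finner D r f (tensorAct D r (BB D 0) f) = ((1 / (D : ℝ) ^ r) * ∑ x, f x) ^ 2 := by
  have hconst : tensorAct D r (BB D 0) f = fun _ => (1 / (D : ℝ) ^ r) * ∑ x, f x := by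
    funext x
    simp [tensorAct, BB, Finset.mul_sum]
  rw [finner, hconst, ← Finset.sum_mul]
  ring

end TensorPower

theorem stmt_13_general (D r : ℕ) (hD : 1 ≤ D) (ρ : ℝ) (hρ0 : 0 < ρ)
    (T : Matrix (Fin D) (Fin D) ℝ) (hsymm : T.IsSymm)
    (hrow : ∀ i, ∑ j, T i j = 1)
    (hspec : ∀ v : Fin D → ℝ, ∑ i, v i = 0 →
      Real.sqrt (∑ i, T.mulVec v i ^ 2) ≤ ρ * Real.sqrt (∑ i, v i ^ 2))
    (f : (Fin r → Fin D) → ℝ)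
    (μ : ℝ) (hμ : μ = (1 / (D : ℝ) ^ r) * ∑ x : Fin r → Fin D, f x) :
    finner D r f (tensorAct D r T f) ≥ μ ^ 2 - finner D r f (tensorAct D r (BB D ρ) f) := by
  have hD0 : D ≠ 0 := by omega
  have hspec2 : ∀ w : Fin D → ℝ, ∑ i, w i = 0 → ∑ i, (T *ᵥ w) i ^ 2 ≤ ρ ^ 2 * ∑ i, w i ^ 2 := by
    intro w hw
    rw [← Real.sqrt_le_sqrt_iff (by positivity), Real.sqrt_mul (sq_nonneg ρ),
      Real.sqrt_sq hρ0.le]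
    exact hspec w hw
  have hQ := sum_sq_BB_mul_mul_BB_mulVec_le hD0 hsymm hrow hρ0.le hspec2 (c := (√ρ)⁻¹)
    (by rw [inv_pow, Real.sq_sqrt hρ0.le, inv_mul_cancel₀ hρ0.ne'])
  have key := sum_mul_tensorAct_sub_le_of_conj (BB_isSymm √ρ) (BB_isSymm 0)
    (BB_zero_mul_BB_zero hD0) (BB_conj_mul_BB_zero hD0 hrow _) hQ
    (by simp only [BB_mul_BB hD0, mul_zero, zero_mul]) f
  rw [BB_mul_BB hD0, Real.mul_self_sqrt hρ0.le,
    BB_mul_conj_mul_BB hD0 T (Real.sqrt_ne_zero'.2 hρ0)] at key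
  rw [hμ, ← finner_tensorAct_BB_zero]
  simp only [finner]
  nlinarith [mul_nonneg (by positivity : (0:ℝ) ≤ 1 / (D : ℝ) ^ r) (sub_nonneg.2 key)]

/-- For a symmetric Markov operator `T` on `[D]` with spectral radius at most `ρ`
and `f : [D]^r → [0,1]` with mean `μ`, `⟨f, T^{⊗r} f⟩ ≥ μ² - S_ρ(f)`. -/
theorem stmt_13 (D r : ℕ) (hD : 1 ≤ D) (hr : 1 ≤ r) (ρ : ℝ) (hρ0 : 0 < ρ) (hρ1 : ρ < 1)
    (T : Matrix (Fin D) (Fin D) ℝ) (hsymm : T.IsSymm)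
    (hnonneg : ∀ i j, 0 ≤ T i j) (hrow : ∀ i, ∑ j, T i j = 1)
    (hspec : ∀ v : Fin D → ℝ, ∑ i, v i = 0 →
      Real.sqrt (∑ i, T.mulVec v i ^ 2) ≤ ρ * Real.sqrt (∑ i, v i ^ 2))
    (f : (Fin r → Fin D) → ℝ) (hf0 : ∀ x, 0 ≤ f x) (hf1 : ∀ x, f x ≤ 1)
    (μ : ℝ) (hμ : μ = (1 / (D : ℝ) ^ r) * ∑ x : Fin r → Fin D, f x) :
    finner D r f (tensorAct D r T f) ≥ μ ^ 2 - finner D r f (tensorAct D r (BB D ρ) f) :=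
  stmt_13_general D r hD ρ hρ0 T hsymm hrow hspec f μ hμ
end
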